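/- arXiv:2401.02946 — 7 statements merged into one kernel-verified Lean document; each statement's English description precedes it below -/
import Mathlib

section
/- Let A be a commutative ring and M a finitely generated A-module whose set P(M) of height-one primes in the support of the torsion submodule of M is finite. Then A_p is a valuation ring for every prime p maximal among those contained in the union of the primes in P(M) if and only if A_q is a valuation ring for every q in P(M). -/
/-- The set `P(M)`: height-one primes of `A` lying in the support of the torsion
submodule of `M`. -/
def heightOneTorsionSupport (A : Type*) [CommRing A] (M : Type*) [AddCommGroup M]
    [Module A M] : Set (PrimeSpectrum A) :=
  {q | Order.height q = 1 ∧ q ∈ Module.support A (Submodule.torsion A M)}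

/-- A commutative ring is a "valuation ring" in the sense of the paper if its ideals are
linearly ordered by inclusion. -/
def IdealsLinearlyOrdered (B : Type*) [CommRing B] : Prop :=
  ∀ I J : Ideal B, I ≤ J ∨ J ≤ I

/-!
By prime avoidance, an ideal contained in the union of the finitely many primes of `P(M)`
lies in one of them. Since height-one primes are pairwise incomparable, the primes maximal
among those contained in that union are therefore exactly the members of `P(M)`, and both
sides of the equivalence quantify over the same set of primes.
-/

theorem Order.isAntichain_setOf_height_eq {α : Type*} [PartialOrder α] (n : ℕ) :
    IsAntichain (· ≤ ·) {x : α | Order.height x = n} := by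
  intro x hx y hy hne hle
  have hlt := Order.height_strictMono (lt_of_le_of_ne hle hne) (by simp [hx.out])
  simp [hx.out, hy.out] at hlt

theorem isAntichain_heightOneTorsionSupport (A : Type*) [CommRing A] (M : Type*)
    [AddCommGroup M] [Module A M] : IsAntichain (· ≤ ·) (heightOneTorsionSupport A M) :=
  (Order.isAntichain_setOf_height_eq 1).subset fun _ hq => by simpa using hq.1

namespace PrimeSpectrum

variable {A : Type*} [CommRing A] {S : Set (PrimeSpectrum A)}

theorem asIdeal_subset_biUnion {q : PrimeSpectrum A} (hq : q ∈ S) :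
    (q.asIdeal : Set A) ⊆ ⋃ q ∈ S, (q.asIdeal : Set A) :=
  Set.subset_biUnion_of_mem (u := fun q : PrimeSpectrum A => (q.asIdeal : Set A)) hq

theorem exists_le_of_subset_biUnion (hS : S.Finite) {I : Ideal A}
    (hI : (I : Set A) ⊆ ⋃ q ∈ S, (q.asIdeal : Set A)) : ∃ q ∈ S, I ≤ q.asIdeal := by
  obtain ⟨q, -, -⟩ := Set.mem_iUnion₂.mp (hI I.zero_mem)
  exact (Ideal.subset_union_prime_finite hS q q fun p _ _ _ => p.isPrime).mp hI

theorem exists_eq_of_maximal_subset_biUnion (hS : S.Finite) {P : Ideal A}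
    (hP : (P : Set A) ⊆ ⋃ q ∈ S, (q.asIdeal : Set A))
    (hmax : ∀ P' : Ideal A, P'.IsPrime → (P' : Set A) ⊆ ⋃ q ∈ S, (q.asIdeal : Set A) →
      P ≤ P' → P = P') :
    ∃ q ∈ S, P = q.asIdeal := by
  obtain ⟨q, hq, hPq⟩ := exists_le_of_subset_biUnion hS hP
  exact ⟨q, hq, hmax q.asIdeal q.isPrime (asIdeal_subset_biUnion hq) hPq⟩

theorem asIdeal_eq_of_le_of_subset_biUnion (hS : S.Finite) (hanti : IsAntichain (· ≤ ·) S)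
    {q : PrimeSpectrum A} (hq : q ∈ S) {I : Ideal A}
    (hI : (I : Set A) ⊆ ⋃ q ∈ S, (q.asIdeal : Set A)) (hqI : q.asIdeal ≤ I) :
    q.asIdeal = I := by
  obtain ⟨q', hq', hIq'⟩ := exists_le_of_subset_biUnion hS hI
  obtain rfl : q = q' := hanti.eq hq hq' (show q ≤ q' from hqI.trans hIq')
  exact le_antisymm hqI hIq'

end PrimeSpectrum

theorem stmt0_general {A : Type*} [CommRing A] {M : Type*} [AddCommGroup M] [Module A M]
    (hfin : (heightOneTorsionSupport A M).Finite) :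
    (∀ (P : Ideal A) [P.IsPrime],
        (P : Set A) ⊆ ⋃ q ∈ heightOneTorsionSupport A M, (q.asIdeal : Set A) →
        (∀ P' : Ideal A, P'.IsPrime →
          (P' : Set A) ⊆ ⋃ q ∈ heightOneTorsionSupport A M, (q.asIdeal : Set A) →
          P ≤ P' → P = P') →
        IdealsLinearlyOrdered (Localization.AtPrime P)) ↔
      (∀ q ∈ heightOneTorsionSupport A M,
        IdealsLinearlyOrdered (Localization.AtPrime q.asIdeal)) := by
  have hanti := isAntichain_heightOneTorsionSupport A M
  constructor
  · intro h q hq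
    exact h q.asIdeal (PrimeSpectrum.asIdeal_subset_biUnion hq) fun _ _ hP' hle =>
      PrimeSpectrum.asIdeal_eq_of_le_of_subset_biUnion hfin hanti hq hP' hle
  · intro h P _ hP hmax
    obtain ⟨q, hq, rfl⟩ := PrimeSpectrum.exists_eq_of_maximal_subset_biUnion hfin hP hmax
    exact h q hq

theorem stmt0 {A : Type*} [CommRing A] {M : Type*} [AddCommGroup M] [Module A M]
    [Module.Finite A M]
    (hfin : (heightOneTorsionSupport A M).Finite) :
    (∀ (P : Ideal A) [P.IsPrime],
        (P : Set A) ⊆ ⋃ q ∈ heightOneTorsionSupport A M, (q.asIdeal : Set A) →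
        (∀ P' : Ideal A, P'.IsPrime →
          (P' : Set A) ⊆ ⋃ q ∈ heightOneTorsionSupport A M, (q.asIdeal : Set A) →
          P ≤ P' → P = P') →
        IdealsLinearlyOrdered (Localization.AtPrime P)) ↔
      (∀ q ∈ heightOneTorsionSupport A M,
        IdealsLinearlyOrdered (Localization.AtPrime q.asIdeal)) :=
  stmt0_general hfin
end

section
/- Every unique factorisation domain A is amenable: its total quotient ring is a field, every height-one prime is principal (hence finitely generated), every finitely generated torsion A-module has finite set of height-one primes in its support, and the localisation of A at every height-one prime is a discrete valuation ring. -/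
universe u

open UniqueFactorizationMonoid in
/-- A height-one prime in a UFD is generated by a prime element. -/
lemma heightOnePrincipal {A : Type u} [CommRing A] [IsDomain A] [UniqueFactorizationMonoid A]
    (q : Ideal A) (hq : q.IsPrime)
    (h : Order.height (⟨q, hq⟩ : PrimeSpectrum A) = 1) :
    ∃ π : A, Prime π ∧ q = Ideal.span {π} := by
  have hbot : q ≠ ⊥ := by
    rintro rfl
    have : IsMin (⟨⊥, hq⟩ : PrimeSpectrum A) := by
      intro y _
      show (⊥ : Ideal A) ≤ y.asIdeal
      exact bot_le
    rw [Order.height_eq_zero.mpr this] at h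
    simp at h
  obtain ⟨π, hπq, hπ⟩ := hq.exists_mem_prime_of_ne_bot hbot
  refine ⟨π, hπ, ?_⟩
  have hsp : (Ideal.span {π}).IsPrime := (Ideal.span_singleton_prime hπ.ne_zero).mpr hπ
  have hle : Ideal.span {π} ≤ q := (Ideal.span_singleton_le_iff_mem q).mpr hπq
  by_contra hne
  have hlt : (⟨Ideal.span {π}, hsp⟩ : PrimeSpectrum A) < ⟨q, hq⟩ := by
    refine lt_of_le_of_ne hle ?_
    intro hc
    exact hne ((PrimeSpectrum.ext_iff.mp hc).symm)
  have h0 : Order.height (⟨Ideal.span {π}, hsp⟩ : PrimeSpectrum A) < 1 := by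
    have := Order.height_le_coe_iff (x := (⟨q, hq⟩ : PrimeSpectrum A)) (n := 1)
    simp only [Nat.cast_one] at this
    exact this.mp h.le _ hlt
  rw [ENat.lt_one_iff_eq_zero, Order.height_eq_zero] at h0
  have hbb : (⊥ : Ideal A).IsPrime := Ideal.bot_prime
  have : (⟨⊥, hbb⟩ : PrimeSpectrum A) < ⟨Ideal.span {π}, hsp⟩ := by
    refine lt_of_le_of_ne bot_le ?_
    intro hc
    have : Ideal.span {π} = (⊥ : Ideal A) := (PrimeSpectrum.ext_iff.mp hc).symm
    exact hπ.ne_zero (by simpa [Ideal.span_singleton_eq_bot] using this)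
  exact this.not_ge (h0 this.le)

/-- Every unique factorisation domain is amenable: its total quotient ring (= fraction
field) is a field, every height-one prime is principal (hence finitely generated),
every finitely generated torsion module has only finitely many height-one primes in its
support, and the localisation at every height-one prime is a discrete valuation ring. -/
theorem stmt4 (A : Type u) [CommRing A] [IsDomain A] [UniqueFactorizationMonoid A] :
    IsField (FractionRing A) ∧
    (∀ (q : Ideal A) [hq : q.IsPrime],
      Order.height (⟨q, hq⟩ : PrimeSpectrum A) = 1 → Submodule.IsPrincipal q) ∧
    (∀ (M : Type u) [AddCommGroup M] [Module A M], Module.Finite A M →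
      Module.IsTorsion A M →
      {q : PrimeSpectrum A | Order.height q = 1 ∧ q ∈ Module.support A M}.Finite) ∧
    (∀ (q : Ideal A) [hq : q.IsPrime],
      Order.height (⟨q, hq⟩ : PrimeSpectrum A) = 1 →
        IsDiscreteValuationRing (Localization.AtPrime q)) := by
  refine ⟨Field.toIsField _, ?_, ?_, ?_⟩
  · intro q hq h
    obtain ⟨π, _, rfl⟩ := heightOnePrincipal q hq h
    exact ⟨⟨π, rfl⟩⟩
  · intro M _ _ hfin htor
    obtain ⟨a, haann, ha0'⟩ :=
      (Submodule.annihilator_top_inter_nonZeroDivisors htor)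
    have ha0 : a ≠ 0 := nonZeroDivisors.ne_zero ha0'
    have haann : a ∈ Module.annihilator A M := by
      rwa [← Submodule.annihilator_top]
    classical
    set T : Set (Ideal A) :=
      (fun p => Ideal.span {p}) '' ((UniqueFactorizationMonoid.factors a).toFinset : Set A)
    have hT : T.Finite := Set.Finite.image _ (Finset.finite_toSet _)
    refine Set.Finite.subset (Set.Finite.preimage
      (Set.injOn_of_injective (fun x y hxy => PrimeSpectrum.ext hxy)) hT) ?_
    rintro ⟨q, hq⟩ ⟨h1, hsupp⟩
    obtain ⟨π, hπ, hqeq⟩ := heightOnePrincipal q hq h1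
    have haq : a ∈ q := by
      rw [Module.support_eq_zeroLocus] at hsupp
      exact hsupp haann
    have hdvd : π ∣ a := by
      rwa [hqeq, Ideal.mem_span_singleton] at haq
    obtain ⟨p, hpmem, hassoc⟩ :=
      UniqueFactorizationMonoid.exists_mem_factors_of_dvd ha0 hπ.irreducible hdvd
    refine ⟨p, by simpa using hpmem, ?_⟩
    show Ideal.span {p} = q
    rw [hqeq]
    exact (Ideal.span_singleton_eq_span_singleton.mpr hassoc).symm
  · intro q hq h
    obtain ⟨π, hπ, hqeq⟩ := heightOnePrincipal q hq h
    set R' := Localization.AtPrime q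
    have hinj : Function.Injective (algebraMap A R') :=
      IsLocalization.injective R' q.primeCompl_le_nonZeroDivisors
    have hπ'0 : algebraMap A R' π ≠ 0 := fun hc =>
      hπ.ne_zero (hinj (by simpa using hc))
    have hmax : IsLocalRing.maximalIdeal R' = Ideal.span {algebraMap A R' π} := by
      rw [← Localization.AtPrime.map_eq_maximalIdeal (I := q),
        congrArg (Ideal.map (algebraMap A R')) hqeq, Ideal.map_span, Set.image_singleton]
    have hirr : Irreducible (algebraMap A R' π) :=
      IsDiscreteValuationRing.irreducible_of_span_eq_maximalIdeal _ hπ'0 hmax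
    apply IsDiscreteValuationRing.ofHasUnitMulPowIrreducibleFactorization
    refine ⟨algebraMap A R' π, hirr, ?_⟩
    intro x hx
    obtain ⟨⟨r, s⟩, rfl⟩ := IsLocalization.mk'_surjective q.primeCompl x
    have hr0 : r ≠ 0 := by
      rintro rfl
      simp [IsLocalization.mk'_zero] at hx
    obtain ⟨n, b, hbnd, rfl⟩ := WfDvdMonoid.max_power_factor hr0 hπ.irreducible
    have hbq : b ∈ q.primeCompl := by
      show b ∉ (q : Set A)
      rw [hqeq]
      simpa [SetLike.mem_coe, Ideal.mem_span_singleton] using hbnd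
    have hbunit : IsUnit (algebraMap A R' b) :=
      (IsLocalization.AtPrime.isUnit_to_map_iff R' q b).mpr hbq
    refine ⟨n, ?_⟩
    have hbu : IsUnit (IsLocalization.mk' R' b s) :=
      (IsLocalization.AtPrime.isUnit_mk'_iff R' q b s).mpr hbq
    refine ⟨hbu.unit, ?_⟩
    rw [IsUnit.unit_spec, ← map_pow]
    exact IsLocalization.mul_mk'_eq_mk'_of_mul (π ^ n) b s
end

section
/- Let R be a commutative ring, G a finite abelian group, A = R[G], and f : R → A the canonical ring map. For an A-module M: M is a torsion A-module if and only if the restriction of M along f is a torsion R-module. -/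
open Polynomial nonZeroDivisors

/-- If `a` is a nonzerodivisor of an `R`-algebra `A` which is a root of a nonzero
polynomial over `R`, then `a` divides the image of some nonzero element of `R`. -/
lemma aux_dvd_algebraMap {R A : Type*} [CommRing R] [CommRing A] [Algebra R A]
    (a : A) (ha : a ∈ A⁰) :
    ∀ (n : ℕ) (p : R[X]), p.natDegree ≤ n → p ≠ 0 → aeval a p = 0 →
      ∃ r : R, r ≠ 0 ∧ a ∣ algebraMap R A r := by
  intro n
  induction n with
  | zero =>
      intro p hdeg hp hroot
      refine ⟨p.coeff 0, fun h => hp ?_, ?_⟩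
      · have := Polynomial.eq_C_of_natDegree_le_zero hdeg
        rw [this, h, map_zero]
      · have := Polynomial.eq_C_of_natDegree_le_zero hdeg
        rw [this] at hroot
        simp only [aeval_C] at hroot
        rw [hroot]; exact dvd_zero a
  | succ n ih =>
      intro p hdeg hp hroot
      have key : aeval a p.divX * a + algebraMap R A (p.coeff 0) = 0 := by
        have h := congrArg (aeval a) (Polynomial.divX_mul_X_add p)
        simpa [hroot] using h
      by_cases hc : p.coeff 0 = 0
      · rw [hc, map_zero, add_zero] at key
        have hdvx : aeval a p.divX = 0 := (mem_nonZeroDivisors_iff_right.mp ha) _ key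
        have hdx0 : p.divX ≠ 0 := by
          intro h
          apply hp
          have := (Polynomial.divX_mul_X_add p).symm
          rw [h, hc] at this
          simpa using this
        refine ih p.divX ?_ hdx0 hdvx
        rw [Polynomial.natDegree_divX_eq_natDegree_tsub_one]
        omega
      · refine ⟨p.coeff 0, hc, ⟨-(aeval a p.divX), ?_⟩⟩
        have : algebraMap R A (p.coeff 0) = -(aeval a p.divX * a) := by linear_combination key
        rw [this]; ring

/-- Let `R` be a commutative domain, `G` a finite abelian group, `A = R[G]` the group
ring, and `M` an `A`-module.  Then `M` is a torsion `A`-module if and only if `M`,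
viewed as an `R`-module by restriction along the canonical map `R → R[G]`, is a torsion
`R`-module.  (The restricted `R`-module structure is encoded by the scalar tower.) -/
theorem stmt6 (R : Type*) [CommRing R] [IsDomain R]
    (G : Type*) [CommGroup G] [Fintype G]
    (M : Type*) [AddCommGroup M] [Module (MonoidAlgebra R G) M]
    [Module R M] [IsScalarTower R (MonoidAlgebra R G) M] :
    Module.IsTorsion (MonoidAlgebra R G) M ↔ Module.IsTorsion R M := by
  constructor
  · intro h x
    obtain ⟨⟨a, ha⟩, hax⟩ := @h x
    haveI : Module.Finite R (MonoidAlgebra R G) :=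
      Module.Finite.equiv (MonoidAlgebra.coeffLinearEquiv (R := R) (S := R) (M := G)).symm
    have hint : IsIntegral R a := IsIntegral.of_finite R a
    obtain ⟨p, hmonic, hroot⟩ := hint
    obtain ⟨r, hr, b, hb⟩ := aux_dvd_algebraMap a ha p.natDegree p le_rfl hmonic.ne_zero
      (by rw [Polynomial.aeval_def]; exact hroot)
    refine ⟨⟨r, mem_nonZeroDivisors_of_ne_zero hr⟩, ?_⟩
    show r • x = 0
    rw [← algebraMap_smul (MonoidAlgebra R G) r x, hb, mul_comm, mul_smul]
    have : a • x = 0 := hax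
    rw [this, smul_zero]
  · intro h x
    obtain ⟨⟨r, hr⟩, hrx⟩ := @h x
    refine ⟨⟨algebraMap R (MonoidAlgebra R G) r, ?_⟩, ?_⟩
    · rw [mem_nonZeroDivisors_iff_right]
      intro z hz
      rw [mul_comm, ← Algebra.smul_def] at hz
      have hr0 : r ≠ 0 := nonZeroDivisors.ne_zero hr
      have hz' : r • z.coeff = (0 : G →₀ R) := congrArg MonoidAlgebra.coeff hz
      have hzz : z.coeff = 0 := by
        refine Finsupp.ext fun g => ?_
        have h1 := DFunLike.congr_fun hz' g
        simp only [Finsupp.smul_apply, smul_eq_mul, Finsupp.coe_zero, Pi.zero_apply] at h1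
        exact (mul_eq_zero.mp h1).resolve_left hr0
      exact MonoidAlgebra.coeff_injective hzz
    · show algebraMap R (MonoidAlgebra R G) r • x = 0
      rw [algebraMap_smul]
      exact hrx
end

section
/- Let R be a domain in which p is not invertible, G a finite abelian group with p dividing |G|, q a height-one prime of R containing p, and A = R[G]. Then for any height-one prime P of A lying over q, the localisation A_P is not a valuation ring; consequently A is not an amenable ring. -/
universe u

/-- A finitely generated module is amenable if (P₁) the localisation of `A` at every
prime maximal among those contained in the union of the primes of `P(M)` has linearly
ordered ideals (is a valuation ring), and (P₂) `P(M)` is finite and every prime in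
`P(M)` is finitely generated. -/
def IsAmenableModule (A : Type*) [CommRing A] (M : Type*) [AddCommGroup M]
    [Module A M] : Prop :=
  (∀ (P : Ideal A) [P.IsPrime],
      (P : Set A) ⊆ ⋃ q ∈ heightOneTorsionSupport A M, (q.asIdeal : Set A) →
      (∀ P' : Ideal A, P'.IsPrime →
        (P' : Set A) ⊆ ⋃ q ∈ heightOneTorsionSupport A M, (q.asIdeal : Set A) →
        P ≤ P' → P = P') →
      ∀ I J : Ideal (Localization.AtPrime P), I ≤ J ∨ J ≤ I) ∧
  (heightOneTorsionSupport A M).Finite ∧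
  (∀ q ∈ heightOneTorsionSupport A M, q.asIdeal.FG)

/-- A commutative ring is amenable if its total quotient ring is semisimple and every
finitely presented torsion module over it is amenable. -/
def IsAmenableRing (A : Type u) [CommRing A] : Prop :=
  IsSemisimpleRing (FractionRing A) ∧
  ∀ (M : Type u) [AddCommGroup M] [Module A M], Module.FinitePresentation A M →
    Module.IsTorsion A M → IsAmenableModule A M

open MonoidAlgebra Finset

namespace Stmt8Aux

set_option linter.unusedSectionVars false

variable {R : Type*} [CommRing R] {G : Type*} [CommGroup G] [Fintype G]

variable (g : G)

/-- representative of the coset of `a` modulo `zpowers g`. -/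
noncomputable def rep (a : G) : G := (QuotientGroup.mk (s := Subgroup.zpowers g) a).out

lemma rep_mk (a : G) :
    QuotientGroup.mk (s := Subgroup.zpowers g) (rep g a) = QuotientGroup.mk a :=
  QuotientGroup.out_eq' _

lemma rep_spec (a : G) : ∃ i < orderOf g, rep g a * g ^ i = a := by
  have h := QuotientGroup.eq.mp (rep_mk g a)
  have h2 : (rep g a)⁻¹ * a ∈ Submonoid.powers g := by
    rw [(isOfFinOrder_of_finite g).mem_powers_iff_mem_zpowers]
    exact h
  obtain ⟨n, hn⟩ := h2
  simp only at hn
  refine ⟨n % orderOf g, Nat.mod_lt _ (orderOf_pos g), ?_⟩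
  rw [pow_mod_orderOf, hn, mul_inv_cancel_left]

lemma rep_coset (a : G) (i : ℕ) : rep g (a * (g ^ i)⁻¹) = rep g a := by
  unfold rep
  congr 1
  rw [QuotientGroup.eq]
  simpa using Subgroup.inv_mem _ (Subgroup.zpowers_le.mpr (le_refl _) ▸ (Subgroup.zpowers g).pow_mem (Subgroup.mem_zpowers g) i : (g ^ i) ∈ Subgroup.zpowers g)

lemma rep_rep (a : G) : rep g (rep g a) = rep g a := by
  unfold rep
  congr 1
  exact QuotientGroup.out_eq' _



section Alg
variable (R)

/-- The norm element `∑ i < orderOf g, g^i`. -/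
noncomputable def nrm : MonoidAlgebra R G := ∑ i ∈ Finset.range (orderOf g), of R G (g ^ i)

lemma mul_nrm_apply (r : MonoidAlgebra R G) (a : G) :
    (r * nrm R g).coeff a = ∑ i ∈ Finset.range (orderOf g), r.coeff (a * (g ^ i)⁻¹) := by
  rw [nrm, Finset.mul_sum]
  rw [MonoidAlgebra.coeff_sum, Finset.sum_apply']
  refine Finset.sum_congr rfl fun i _ => ?_
  rw [of_apply, mul_single_apply, mul_one]

lemma supported_mul_nrm (r : MonoidAlgebra R G) (hr : ∀ x, x ≠ rep g x → r.coeff x = 0) (a : G) :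
    (r * nrm R g).coeff a = r.coeff (rep g a) := by
  obtain ⟨i₀, hi₀, hrep⟩ := rep_spec g a
  have ha : a * (g ^ i₀)⁻¹ = rep g a := mul_inv_eq_iff_eq_mul.mpr hrep.symm
  rw [mul_nrm_apply]
  rw [Finset.sum_eq_single i₀]
  · rw [ha]
  · intro i hi hne
    by_contra hcon
    have h1 : a * (g ^ i)⁻¹ = rep g (a * (g ^ i)⁻¹) := by
      by_contra h2
      exact hcon (hr _ h2)
    rw [rep_coset] at h1
    have h3 := h1.trans ha.symm
    have : g ^ i = g ^ i₀ := inv_injective (mul_left_cancel h3)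
    exact hne (pow_injOn_Iio_orderOf (Finset.mem_range.mp hi) hi₀ this)
  · intro h
    exact absurd (Finset.mem_range.mpr hi₀) h

lemma nrm_mul_of : nrm R g * of R G g = nrm R g := by
  rw [nrm, Finset.sum_mul]
  have h1 : ∀ i ∈ Finset.range (orderOf g), of R G (g ^ i) * of R G g = of R G (g ^ (i + 1)) := by
    intro i _
    rw [← map_mul, pow_succ]
  rw [Finset.sum_congr rfl h1]
  have h2 := Finset.sum_range_succ (fun i => of R G (g ^ i)) (orderOf g)
  have h3 := Finset.sum_range_succ' (fun i => of R G (g ^ i)) (orderOf g)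
  rw [h2, pow_orderOf_eq_one, ← pow_zero g] at h3
  exact (add_left_injective _ h3).symm

lemma eps_mul_nrm : (of R G g - 1) * nrm R g = 0 := by
  rw [sub_mul, one_mul, mul_comm, nrm_mul_of, sub_self]

lemma invariant_apply (f : MonoidAlgebra R G) (hf : f * of R G g = f) (a : G) (i : ℕ) :
    f.coeff (a * (g ^ i)⁻¹) = f.coeff a := by
  induction i with
  | zero => simp
  | succ n ih =>
    have : a * (g ^ (n + 1))⁻¹ = (a * (g ^ n)⁻¹) * g⁻¹ := by
      rw [pow_succ]; group
    rw [this]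
    have h2 : f.coeff ((a * (g ^ n)⁻¹) * g⁻¹) = f.coeff (a * (g ^ n)⁻¹) := by
      conv_rhs => rw [← hf]
      rw [of_apply, mul_single_apply, mul_one]
    rw [h2, ih]

lemma lemC (f : MonoidAlgebra R G) (hf : f * of R G g = f) :
    ∃ h : MonoidAlgebra R G, f = h * nrm R g := by
  classical
  refine ⟨MonoidAlgebra.ofCoeff (Finsupp.equivFunOnFinite.symm (fun x => if x = rep g x then f.coeff x else 0)), ?_⟩
  ext a
  rw [supported_mul_nrm]
  · obtain ⟨i₀, _, hrep⟩ := rep_spec g a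
    have ha : a * (g ^ i₀)⁻¹ = rep g a := mul_inv_eq_iff_eq_mul.mpr hrep.symm
    have : f.coeff (rep g a) = f.coeff a := by rw [← ha, invariant_apply R g f hf]
    simp only [MonoidAlgebra.coeff_ofCoeff, Finsupp.coe_equivFunOnFinite_symm, rep_rep, if_pos rfl]
    exact this.symm
  · intro x hx
    simp only [MonoidAlgebra.coeff_ofCoeff, Finsupp.coe_equivFunOnFinite_symm, if_neg hx]


lemma single_mk (Q : Ideal (MonoidAlgebra R G)) (hQ : of R G g - 1 ∈ Q) (x : G) (c : R) :
    Ideal.Quotient.mk Q (MonoidAlgebra.single x c)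
      = Ideal.Quotient.mk Q (MonoidAlgebra.single (rep g x) c) := by
  obtain ⟨i, _, hx⟩ := rep_spec g x
  have h1 : (MonoidAlgebra.single (rep g x) c : MonoidAlgebra R G) * (of R G g) ^ i
      = MonoidAlgebra.single x c := by
    rw [← map_pow, of_apply, MonoidAlgebra.single_mul_single, mul_one, hx]
  have h2 : Ideal.Quotient.mk Q (of R G g) = 1 := by
    have : Ideal.Quotient.mk Q (of R G g - 1) = 0 := Ideal.Quotient.eq_zero_iff_mem.mpr hQ
    rw [map_sub, map_one, sub_eq_zero] at this
    exact this
  rw [← h1, map_mul, map_pow, h2, one_pow, mul_one]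

set_option synthInstance.maxHeartbeats 400000 in
lemma lemD (f : MonoidAlgebra R G) (hf : f * nrm R g = 0) :
    ∃ e : MonoidAlgebra R G, f = e * (of R G g - 1) := by
  classical
  set r : MonoidAlgebra R G := ∑ x : G, MonoidAlgebra.single (rep g x) (f.coeff x) with hr
  have hmk : Ideal.Quotient.mk (Ideal.span {of R G g - 1}) f
      = Ideal.Quotient.mk (Ideal.span {of R G g - 1}) r := by
    have hfe : f = ∑ x : G, (MonoidAlgebra.single x (f.coeff x) : MonoidAlgebra R G) := by
      rw [← Finsupp.sum_fintype _ _ (fun x => MonoidAlgebra.single_zero x), MonoidAlgebra.sum_coeff_single]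
    conv_lhs => rw [hfe]
    rw [hr, map_sum, map_sum]
    exact Finset.sum_congr rfl fun x _ =>
      single_mk R g (Ideal.span {of R G g - 1}) (Ideal.subset_span (Set.mem_singleton _)) x (f.coeff x)
  rw [Ideal.Quotient.eq] at hmk
  obtain ⟨e, he⟩ := Ideal.mem_span_singleton'.mp hmk
  refine ⟨e, ?_⟩
  have hrN : r * nrm R g = 0 := by
    have : f - r = e * (of R G g - 1) := he.symm
    have h4 : r = f - e * (of R G g - 1) := by rw [← this]; ring
    rw [h4, sub_mul, hf, mul_assoc, eps_mul_nrm, mul_zero, sub_zero]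
  have hsupp : ∀ x, x ≠ rep g x → r.coeff x = 0 := by
    intro y hy
    rw [hr, MonoidAlgebra.coeff_sum, Finset.sum_apply']
    refine Finset.sum_eq_zero fun x _ => ?_
    rw [MonoidAlgebra.coeff_single, Finsupp.single_apply]
    split_ifs with h
    · exact absurd (by rw [← h, rep_rep]) hy
    · rfl
  have hr0 : r = 0 := by
    ext y
    by_cases hy : y = rep g y
    · have := supported_mul_nrm R g r hsupp y
      rw [hrN] at this
      simp only [MonoidAlgebra.coeff_zero, Finsupp.coe_zero, Pi.zero_apply] at this ⊢
      rw [hy]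
      exact this.symm
    · exact hsupp y hy
  have : f = e * (of R G g - 1) + r := by rw [he]; ring
  rw [this, hr0, add_zero]

end Alg

end Stmt8Aux

open Stmt8Aux

/-- If `p` is not invertible in the domain `R`, `G` is a finite abelian group with
`p ∣ |G|`, `q` is a height-one prime of `R` containing `p` and `P` is a height-one
prime of `A = R[G]` lying over `q`, then `A_P` is not a valuation ring (its ideals are
not linearly ordered); consequently `A` is not an amenable ring. -/
theorem stmt8 {R : Type u} [CommRing R] [IsDomain R]
    (p : ℕ) (hp : p.Prime) (hpu : ¬ IsUnit (p : R))
    (G : Type u) [CommGroup G] [Fintype G] (hG : p ∣ Fintype.card G)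
    (q : Ideal R) [hq : q.IsPrime]
    (hq1 : Order.height (⟨q, hq⟩ : PrimeSpectrum R) = 1) (hpq : (p : R) ∈ q)
    (P : Ideal (MonoidAlgebra R G)) [hP : P.IsPrime]
    (hP1 : Order.height (⟨P, hP⟩ : PrimeSpectrum (MonoidAlgebra R G)) = 1)
    (hlying : P.comap (algebraMap R (MonoidAlgebra R G)) = q) :
    ¬ (∀ I J : Ideal (Localization.AtPrime P), I ≤ J ∨ J ≤ I) ∧
    ¬ IsAmenableRing (MonoidAlgebra R G) := by
  classical
  haveI := Fact.mk hp
  obtain ⟨g, hg⟩ := exists_prime_orderOf_dvd_card p hG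
  -- a nonzero element of q
  have hq0 : q ≠ ⊥ := by
    intro h
    subst h
    have hmin : IsMin (⟨(⊥ : Ideal R), hq⟩ : PrimeSpectrum R) := by
      intro b hb
      have : b.asIdeal = ⊥ := le_bot_iff.mp ((PrimeSpectrum.asIdeal_le_asIdeal _ _).mpr hb)
      refine (PrimeSpectrum.asIdeal_le_asIdeal _ _).mp ?_
      rw [this]
    rw [Order.height_eq_zero.mpr hmin] at hq1
    exact zero_ne_one hq1
  obtain ⟨t, ht, ht0⟩ := Submodule.ne_bot_iff q |>.mp hq0
  set τ : MonoidAlgebra R G := algebraMap R (MonoidAlgebra R G) t with hτ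
  have hτP : τ ∈ P := by
    rw [← hlying] at ht
    exact ht
  have hτreg : ∀ z : MonoidAlgebra R G, τ * z = 0 → z = 0 := by
    intro z hz
    have hsm : t • z = 0 := by rwa [Algebra.smul_def]
    ext a
    have := congrArg (fun w : MonoidAlgebra R G => w.coeff a) hsm
    simp only [MonoidAlgebra.coeff_smul, MonoidAlgebra.coeff_zero, Finsupp.smul_apply, smul_eq_mul, Finsupp.coe_zero, Pi.zero_apply] at this
    rcases mul_eq_zero.mp this with h | h
    · exact absurd h ht0
    · simpa using h
  -- p, ε, nrm are in P
  have hpP : ((p : ℕ) : MonoidAlgebra R G) ∈ P := by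
    have h1 : ((p : ℕ) : MonoidAlgebra R G) = algebraMap R (MonoidAlgebra R G) ((p : ℕ) : R) :=
      (map_natCast (algebraMap R (MonoidAlgebra R G)) p).symm
    rw [h1, ← Ideal.mem_comap, hlying]
    exact hpq
  have hp0 : ((p : ℕ) : MonoidAlgebra R G ⧸ P) = 0 := by
    rw [← map_natCast (Ideal.Quotient.mk P) p, Ideal.Quotient.eq_zero_iff_mem]
    exact hpP
  haveI : CharP (MonoidAlgebra R G ⧸ P) p := (CharP.charP_iff_prime_eq_zero hp).mpr hp0
  have hx : Ideal.Quotient.mk P (MonoidAlgebra.of R G g) = 1 := by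
    set x := Ideal.Quotient.mk P (MonoidAlgebra.of R G g) with hxdef
    have hxp : x ^ p = 1 := by
      rw [hxdef, ← map_pow, ← map_pow, ← hg, pow_orderOf_eq_one, map_one, map_one]
    have h2 : (x - 1) ^ p = 0 := by
      rw [sub_pow_char, hxp, one_pow, sub_self]
    have h3 : x - 1 = 0 := pow_eq_zero_iff hp.ne_zero |>.mp h2
    exact sub_eq_zero.mp h3
  have hεP : MonoidAlgebra.of R G g - 1 ∈ P := by
    rw [← Ideal.Quotient.eq_zero_iff_mem, map_sub, map_one, hx, sub_self]
  have hNP : nrm R g ∈ P := by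
    rw [← Ideal.Quotient.eq_zero_iff_mem, nrm, map_sum]
    have h1 : ∀ i ∈ Finset.range (orderOf g),
        Ideal.Quotient.mk P (MonoidAlgebra.of R G (g ^ i)) = 1 := by
      intro i _
      rw [map_pow, map_pow, hx, one_pow]
    rw [Finset.sum_congr rfl h1, Finset.sum_const, Finset.card_range, nsmul_eq_mul, mul_one, hg]
    exact hp0
  -- the key: ideals of the localization are not linearly ordered
  have key : ¬ (∀ I J : Ideal (Localization.AtPrime P), I ≤ J ∨ J ≤ I) := by
    intro hc
    set φ := algebraMap (MonoidAlgebra R G) (Localization.AtPrime P) with hφ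
    -- a helper to clear denominators from a divisibility in the localization
    have clear : ∀ a b : MonoidAlgebra R G, φ a ∣ φ b →
        ∃ s₀ : P.primeCompl, ∃ w : MonoidAlgebra R G, b * s₀ = a * w := by
      intro a b ⟨c, hc'⟩
      obtain ⟨⟨w, s⟩, hws⟩ := IsLocalization.mk'_surjective P.primeCompl c
      have h1 : φ (b * (s : MonoidAlgebra R G)) = φ (a * w) := by
        rw [map_mul, map_mul, hc', ← hws, mul_assoc, IsLocalization.mk'_spec]
      obtain ⟨c', hc''⟩ := (IsLocalization.eq_iff_exists P.primeCompl _).mp h1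
      refine ⟨c' * s, c' * w, ?_⟩
      have : (c' : MonoidAlgebra R G) * (b * s) = c' * (a * w) := hc''
      push_cast
      ring_nf
      ring_nf at this
      linear_combination this
    rcases hc (Ideal.span {φ τ}) (Ideal.span {φ (nrm R g)}) with hle | hle
    · -- nrm divides τ in the localization
      obtain ⟨s₀, w, hw⟩ := clear (nrm R g) τ (Ideal.span_singleton_le_span_singleton.mp hle)
      -- multiply by ε
      have h1 : τ * ((s₀ : MonoidAlgebra R G) * (MonoidAlgebra.of R G g - 1)) = 0 := by
        have := congrArg (fun z => z * (MonoidAlgebra.of R G g - 1)) hw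
        calc τ * ((s₀ : MonoidAlgebra R G) * (MonoidAlgebra.of R G g - 1))
            = τ * (s₀ : MonoidAlgebra R G) * (MonoidAlgebra.of R G g - 1) := by ring
          _ = nrm R g * w * (MonoidAlgebra.of R G g - 1) := by rw [this]
          _ = w * ((MonoidAlgebra.of R G g - 1) * nrm R g) := by ring
          _ = 0 := by rw [eps_mul_nrm, mul_zero]
      have h2 : (s₀ : MonoidAlgebra R G) * (MonoidAlgebra.of R G g - 1) = 0 := hτreg _ h1
      have h3 : (s₀ : MonoidAlgebra R G) * MonoidAlgebra.of R G g = (s₀ : MonoidAlgebra R G) := by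
        have h4 : (s₀ : MonoidAlgebra R G) * MonoidAlgebra.of R G g - (s₀ : MonoidAlgebra R G)
            = 0 := by
          calc (s₀ : MonoidAlgebra R G) * MonoidAlgebra.of R G g - (s₀ : MonoidAlgebra R G)
              = (s₀ : MonoidAlgebra R G) * (MonoidAlgebra.of R G g - 1) := by ring
            _ = 0 := h2
        exact sub_eq_zero.mp h4
      obtain ⟨h1', hh⟩ := lemC R g _ h3
      refine s₀.2 ?_
      rw [hh]
      exact Ideal.mul_mem_left P _ hNP
    · -- τ divides nrm in the localization
      obtain ⟨s₀, w, hw⟩ := clear τ (nrm R g) (Ideal.span_singleton_le_span_singleton.mp hle)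
      have h1 : τ * (w * (MonoidAlgebra.of R G g - 1)) = 0 := by
        calc τ * (w * (MonoidAlgebra.of R G g - 1))
            = τ * w * (MonoidAlgebra.of R G g - 1) := by ring
          _ = nrm R g * s₀ * (MonoidAlgebra.of R G g - 1) := by rw [hw]
          _ = (s₀ : MonoidAlgebra R G) * ((MonoidAlgebra.of R G g - 1) * nrm R g) := by ring
          _ = 0 := by rw [eps_mul_nrm, mul_zero]
      have h2 : w * (MonoidAlgebra.of R G g - 1) = 0 := hτreg _ h1
      have h3 : w * MonoidAlgebra.of R G g = w := by
        have h4 : w * MonoidAlgebra.of R G g - w = 0 := by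
          calc w * MonoidAlgebra.of R G g - w = w * (MonoidAlgebra.of R G g - 1) := by ring
            _ = 0 := h2
        exact sub_eq_zero.mp h4
      obtain ⟨h', hh⟩ := lemC R g _ h3
      have h5 : ((s₀ : MonoidAlgebra R G) - τ * h') * nrm R g = 0 := by
        calc ((s₀ : MonoidAlgebra R G) - τ * h') * nrm R g
            = nrm R g * (s₀ : MonoidAlgebra R G) - τ * (h' * nrm R g) := by ring
          _ = nrm R g * (s₀ : MonoidAlgebra R G) - τ * w := by rw [← hh]
          _ = 0 := by rw [← hw]; ring
      obtain ⟨e, he⟩ := lemD R g _ h5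
      have : (s₀ : MonoidAlgebra R G) ∈ P := by
        have h6 : (s₀ : MonoidAlgebra R G)
            = τ * h' + e * (MonoidAlgebra.of R G g - 1) := by
          rw [← he]; ring
        rw [h6]
        exact P.add_mem (Ideal.mul_mem_right _ _ hτP) (Ideal.mul_mem_left _ _ hεP)
      exact s₀.2 this
  refine ⟨key, fun hAm => key ?_⟩
  obtain ⟨-, ham⟩ := hAm
  set I : Ideal (MonoidAlgebra R G) := Ideal.span {MonoidAlgebra.of R G g - 1, τ} with hI
  have hτI : τ ∈ I := Ideal.subset_span (by simp)
  have hIP : I ≤ P := by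
    rw [hI, Ideal.span_le]
    rintro x hx
    simp only [Set.mem_insert_iff, Set.mem_singleton_iff] at hx
    rcases hx with rfl | rfl
    · exact hεP
    · exact hτP
  have hfp : Module.FinitePresentation (MonoidAlgebra R G) (MonoidAlgebra R G ⧸ I) :=
    Module.finitePresentation_of_surjective (Submodule.mkQ I) (Submodule.mkQ_surjective I)
      (by rw [Submodule.ker_mkQ]; exact Submodule.fg_span (Set.toFinite _))
  have htor : Module.IsTorsion (MonoidAlgebra R G) (MonoidAlgebra R G ⧸ I) := by
    intro x
    obtain ⟨z, rfl⟩ := Submodule.mkQ_surjective I x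
    refine ⟨⟨τ, mem_nonZeroDivisors_iff_right.mpr fun y hy => hτreg y (by rwa [mul_comm])⟩, ?_⟩
    show τ • (Submodule.mkQ I z) = 0
    rw [← map_smul, smul_eq_mul]
    have : τ * z ∈ I := Ideal.mul_mem_right z I hτI
    rwa [Submodule.mkQ_apply, Submodule.Quotient.mk_eq_zero]
  obtain ⟨h1, h2, -⟩ := ham (MonoidAlgebra R G ⧸ I) hfp htor
  have hPmem : (⟨P, hP⟩ : PrimeSpectrum (MonoidAlgebra R G)) ∈
      heightOneTorsionSupport (MonoidAlgebra R G) (MonoidAlgebra R G ⧸ I) := by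
    refine ⟨hP1, ?_⟩
    rw [Module.mem_support_iff_exists_annihilator]
    refine ⟨⟨Submodule.Quotient.mk 1, @htor (Submodule.Quotient.mk 1)⟩, ?_⟩
    intro a ha
    rw [Submodule.mem_annihilator_span_singleton] at ha
    have ha' : a • (Submodule.Quotient.mk 1 : MonoidAlgebra R G ⧸ I) = 0 :=
      congrArg Subtype.val ha
    rw [← Submodule.Quotient.mk_smul, smul_eq_mul, mul_one,
      Submodule.Quotient.mk_eq_zero] at ha'
    exact hIP ha'
  have hsub : (P : Set (MonoidAlgebra R G)) ⊆
      ⋃ q' ∈ heightOneTorsionSupport (MonoidAlgebra R G) (MonoidAlgebra R G ⧸ I),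
        (q'.asIdeal : Set (MonoidAlgebra R G)) := fun x hx => Set.mem_biUnion hPmem hx
  refine h1 P hsub ?_
  intro P' hP'p hsub' hle
  by_contra hne
  have hlt : P < P' := lt_of_le_of_ne hle hne
  rw [← h2.coe_toFinset] at hsub'
  obtain ⟨Q, hQF, hPQ⟩ := (Ideal.subset_union_prime
      (f := fun Q : PrimeSpectrum (MonoidAlgebra R G) => Q.asIdeal)
      ⟨P, hP⟩ ⟨P, hP⟩ (fun Q _ _ _ => Q.isPrime)).mp hsub'
  have hQS := h2.mem_toFinset.mp hQF
  have hlt2 : (⟨P, hP⟩ : PrimeSpectrum (MonoidAlgebra R G)) < Q :=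
    (PrimeSpectrum.asIdeal_lt_asIdeal _ _).mp (lt_of_lt_of_le hlt hPQ)
  have hfin : Order.height (⟨P, hP⟩ : PrimeSpectrum (MonoidAlgebra R G)) < ⊤ := by
    rw [hP1]
    exact Ne.lt_top (by simp)
  have hcon := Order.height_strictMono hlt2 hfin
  rw [hP1, hQS.1] at hcon
  exact lt_irrefl _ hcon
end

section
/- Let A be a commutative ring with a decreasing separated filtration I_n = ker(A → A_n) arising from an inverse limit A = lim A_n with surjective transition maps A_n → A_{n-1}. If M is a finitely generated A-module, then the natural map M → lim M/(I_n M) is surjective. -/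
/-!
Lift a compatible family `xₙ ∈ M/(Iₙ M)` to elements `mₙ ∈ M` with `mₙ₊₁ - mₙ ∈ Iₙ₊₁ M`. Over a
finite generating family `g` of `M` these differences have coefficients in `Iₙ₊₁`, so
`mₙ = m₀ + ∑ᵢ cₙᵢ gᵢ` where each coefficient sequence satisfies `cₙ₊₁ᵢ - cₙᵢ ∈ Iₙ₊₁`.
Such a sequence has a limit `aᵢ` in `A = lim Aₙ`, because `(πₙ cₙᵢ)ₙ` is a compatible family of
the inverse system; then `m₀ + ∑ᵢ aᵢ gᵢ` is a preimage of `x`.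
-/

universe u v

variable (A : Type u) [CommRing A] (I : ℕ → Ideal A)
  (M : Type v) [AddCommGroup M] [Module A M]

/-- The inverse limit of the quotients `M/(Iₙ M)`: compatible sequences, where
compatibility of `x (n+1)` and `x n` is expressed by the existence of a common lift
(equivalently, `x (n+1)` maps to `x n` under the canonical map). -/
def LimQuot : Type _ :=
  {x : ∀ n, M ⧸ (I n • ⊤ : Submodule A M) //
    ∀ n, ∃ m : M,
      (Submodule.Quotient.mk m : M ⧸ (I (n + 1) • ⊤ : Submodule A M)) = x (n + 1) ∧
      (Submodule.Quotient.mk m : M ⧸ (I n • ⊤ : Submodule A M)) = x n}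

/-- The natural map `M → lim M/(Iₙ M)`. -/
def toLimQuot : M → LimQuot A I M :=
  fun m => ⟨fun _ => Submodule.Quotient.mk m, fun _ => ⟨m, rfl, rfl⟩⟩

section

variable {R : Type*} [CommRing R] {N : Type*} [AddCommGroup N] [Module R N]

theorem exists_sum_smul_of_mem_ideal_smul_top {ι : Type*} [Fintype ι] {g : ι → N}
    (hg : Submodule.span R (Set.range g) = ⊤) {J : Ideal R} {x : N}
    (hx : x ∈ J • (⊤ : Submodule R N)) :
    ∃ b : ι → R, (∀ i, b i ∈ J) ∧ ∑ i, b i • g i = x := by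
  rw [← hg, Submodule.mem_ideal_smul_span_iff_exists_sum] at hx
  obtain ⟨b, hbJ, rfl⟩ := hx
  exact ⟨b, hbJ, (Finsupp.sum_fintype b (fun i c => c • g i) fun i => zero_smul R (g i)).symm⟩

theorem exists_coeff_seq_of_succ_sub_mem {ι : Type*} [Fintype ι] {g : ι → N}
    (hg : Submodule.span R (Set.range g) = ⊤) {J : ℕ → Ideal R} {m : ℕ → N}
    (hm : ∀ n, m (n + 1) - m n ∈ J (n + 1) • (⊤ : Submodule R N)) :
    ∃ c : ℕ → ι → R, (∀ n i, c (n + 1) i - c n i ∈ J (n + 1)) ∧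
      ∀ n, m n = m 0 + ∑ i, c n i • g i := by
  choose b hbJ hb using fun n => exists_sum_smul_of_mem_ideal_smul_top hg (hm n)
  refine ⟨fun n i => ∑ k ∈ Finset.range n, b k i, fun n i => ?_, fun n => ?_⟩
  · simpa only [Finset.sum_range_succ, add_sub_cancel_left] using hbJ n i
  · rw [← sub_eq_iff_eq_add', ← Finset.sum_range_sub m n]
    simp only [← hb, Finset.sum_smul]
    exact Finset.sum_comm

theorem exists_sub_mem_smul_top_of_succ_sub_mem [Module.Finite R N] {J : ℕ → Ideal R}
    (hR : ∀ c : ℕ → R, (∀ n, c (n + 1) - c n ∈ J (n + 1)) → ∃ a, ∀ n, a - c n ∈ J n)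
    {m : ℕ → N} (hm : ∀ n, m (n + 1) - m n ∈ J (n + 1) • (⊤ : Submodule R N)) :
    ∃ y, ∀ n, y - m n ∈ J n • (⊤ : Submodule R N) := by
  obtain ⟨r, g, hg⟩ := Module.Finite.exists_fin (R := R) (M := N)
  obtain ⟨c, hcJ, hc⟩ := exists_coeff_seq_of_succ_sub_mem hg hm
  choose a ha using fun i => hR (c · i) (hcJ · i)
  refine ⟨m 0 + ∑ i, a i • g i, fun n => ?_⟩
  have hdiff : m 0 + ∑ i, a i • g i - m n = ∑ i, (a i - c n i) • g i := by
    rw [hc n]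
    simp only [sub_smul, Finset.sum_sub_distrib, add_sub_add_left_eq_sub]
  rw [hdiff]
  exact Submodule.sum_mem _ fun i _ => Submodule.smul_mem_smul (ha i n) trivial

end

theorem exists_sub_mem_ker_of_succ_sub_mem_ker {R : Type*} [CommRing R] {B : ℕ → Type*}
    [∀ n, CommRing (B n)] (φ : ∀ n, B (n + 1) →+* B n) (π : ∀ n, R →+* B n)
    (hcompat : ∀ n, (φ n).comp (π (n + 1)) = π n)
    (hsurj : ∀ x : ∀ n, B n, (∀ n, φ n (x (n + 1)) = x n) → ∃ a : R, ∀ n, π n a = x n)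
    (c : ℕ → R) (hc : ∀ n, c (n + 1) - c n ∈ RingHom.ker (π (n + 1))) :
    ∃ a, ∀ n, a - c n ∈ RingHom.ker (π n) := by
  have hπ : ∀ n a, φ n (π (n + 1) a) = π n a := fun n a => RingHom.congr_fun (hcompat n) a
  obtain ⟨a, ha⟩ := hsurj (fun n => π n (c n)) fun n => by
    rw [hπ, ← sub_eq_zero, ← map_sub, ← hπ, RingHom.mem_ker.mp (hc n), map_zero]
  exact ⟨a, fun n => by rw [RingHom.mem_ker, map_sub, ha, sub_self]⟩

/-- Let `A = lim Aₙ` be the inverse limit of an inverse system of commutative rings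
with surjective transition maps `φₙ : A_{n+1} → Aₙ`, with projections `πₙ : A → Aₙ`
and `Iₙ := ker πₙ`.  If `M` is a finitely generated `A`-module then the natural map
`M → lim M/(Iₙ M)` is surjective. -/
theorem stmt11 (B : ℕ → Type u) [∀ n, CommRing (B n)]
    (φ : ∀ n, B (n + 1) →+* B n) (hφ : ∀ n, Function.Surjective (φ n))
    (π : ∀ n, A →+* B n)
    (hcompat : ∀ n, (φ n).comp (π (n + 1)) = π n)
    (hinj : ∀ a : A, (∀ n, π n a = 0) → a = 0)
    (hsurj : ∀ x : ∀ n, B n, (∀ n, φ n (x (n + 1)) = x n) → ∃ a : A, ∀ n, π n a = x n)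
    (hI : ∀ n, I n = RingHom.ker (π n))
    [Module.Finite A M] :
    Function.Surjective (toLimQuot A I M) := by
  intro x
  choose m hm_succ hm using x.2
  have hJ : ∀ c : ℕ → A, (∀ n, c (n + 1) - c n ∈ I (n + 1)) → ∃ a, ∀ n, a - c n ∈ I n := by
    simpa only [hI] using exists_sub_mem_ker_of_succ_sub_mem_ker φ π hcompat hsurj
  obtain ⟨y, hy⟩ := exists_sub_mem_smul_top_of_succ_sub_mem hJ
    fun n => (Submodule.Quotient.eq _).mp ((hm (n + 1)).trans (hm_succ n).symm)
  exact ⟨y, Subtype.ext <| funext fun n => ((Submodule.Quotient.eq _).mpr (hy n)).trans (hm n)⟩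
end

section
/- Let A = lim A_n be an inverse limit of commutative rings with surjective transition maps, I_n the kernel of A → A_n, and N an A-module with N → lim N/(I_n N) bijective (I_•-complete). Then any finitely generated A-submodule M of N is also I_•-complete. -/
universe u v

variable (A : Type u) [CommRing A] (I : ℕ → Ideal A)
  (M : Type v) [AddCommGroup M] [Module A M]

/-- `M` is `I_•`-complete if the natural map `M → lim M/(Iₙ M)` is bijective. -/
def IsIComplete : Prop :=
  Function.Bijective (toLimQuot A I M)


/-! Injectivity passes to submodules because `Iₙ M' ⊆ Iₙ N`. Surjectivity only needs `A` to be
complete: lift a compatible family to elements `cₙ` of `M'`, write `cₙ₊₁ - cₙ` as an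
`Iₙ₊₁`-combination of finitely many generators, and sum the coefficient series in `A`. -/

open Function Submodule

section Completeness

variable {A I M}

theorem toLimQuot_eq_iff {x y : M} :
    toLimQuot A I M x = toLimQuot A I M y ↔ ∀ n, x - y ∈ (I n • ⊤ : Submodule A M) :=
  ⟨fun h n => (Submodule.Quotient.eq _).mp (congrArg (fun t : LimQuot A I M => t.1 n) h),
    fun h => Subtype.ext (funext fun n => (Submodule.Quotient.eq _).mpr (h n))⟩

theorem toLimQuot_injective_of_injective {N : Type*} [AddCommGroup N] [Module A N]
    (f : M →ₗ[A] N) (hf : Injective f) (hN : Injective (toLimQuot A I N)) :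
    Injective (toLimQuot A I M) := by
  intro x y hxy
  refine hf (hN (toLimQuot_eq_iff.mpr fun n => ?_))
  rw [← map_sub]
  have hmap := mem_map_of_mem (f := f) (toLimQuot_eq_iff.mp hxy n)
  rw [map_smul''] at hmap
  exact smul_mono le_rfl le_top hmap

variable (A I) in
def IsSeqComplete : Prop :=
  ∀ s : ℕ → A, (∀ n, s (n + 1) - s n ∈ I (n + 1)) → ∃ b, ∀ n, b - s n ∈ I n

theorem isSeqComplete_of_inverseLimit {B : ℕ → Type*} [∀ n, CommRing (B n)]
    (φ : ∀ n, B (n + 1) →+* B n) (π : ∀ n, A →+* B n)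
    (hcompat : ∀ n, (φ n).comp (π (n + 1)) = π n)
    (hsurj : ∀ x : ∀ n, B n, (∀ n, φ n (x (n + 1)) = x n) → ∃ a : A, ∀ n, π n a = x n)
    (hI : ∀ n, I n = RingHom.ker (π n)) :
    IsSeqComplete A I := by
  intro s hs
  obtain ⟨b, hb⟩ := hsurj (fun n => π n (s n)) fun n => by
    have hs_succ := hs n
    rw [hI, RingHom.mem_ker, map_sub, sub_eq_zero] at hs_succ
    rw [hs_succ, ← RingHom.comp_apply, hcompat]
  exact ⟨b, fun n => by rw [hI, RingHom.mem_ker, map_sub, hb, sub_self]⟩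

theorem exists_sum_smul_eq_of_mem_smul_top {r : ℕ} {e : Fin r → M}
    (he : span A (Set.range e) = ⊤) {J : Ideal A} {x : M} (hx : x ∈ (J • ⊤ : Submodule A M)) :
    ∃ a : Fin r → A, (∀ i, a i ∈ J) ∧ ∑ i, a i • e i = x := by
  rw [← he, mem_ideal_smul_span_iff_exists_sum] at hx
  obtain ⟨a, ha, rfl⟩ := hx
  exact ⟨a, ha, (Finsupp.sum_fintype a (fun i c => c • e i) fun i => zero_smul A (e i)).symm⟩

theorem toLimQuot_surjective_of_span_eq_top (hA : IsSeqComplete A I) {r : ℕ} {e : Fin r → M}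
    (he : span A (Set.range e) = ⊤) : Surjective (toLimQuot A I M) := by
  intro z
  choose c hc_succ hc using z.2
  have hdiff : ∀ n, c (n + 1) - c n ∈ (I (n + 1) • ⊤ : Submodule A M) := fun n => by
    rw [← Submodule.Quotient.eq, hc (n + 1), ← hc_succ n]
  choose α hα_mem hα_sum using fun n => exists_sum_smul_eq_of_mem_smul_top he (hdiff n)
  set S : ℕ → Fin r → A := fun k i => ∑ n ∈ Finset.range k, α n i
  have hS : ∀ k, c k = c 0 + ∑ i, S k i • e i := fun k => by
    simp only [S, Finset.sum_smul]
    rw [Finset.sum_comm, eq_add_of_sub_eq' (Finset.sum_range_sub c k).symm]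
    simp only [hα_sum]
  choose b hb using fun i => hA (S · i) fun n => by simpa [S, Finset.sum_range_succ] using hα_mem n i
  refine ⟨c 0 + ∑ i, b i • e i, Subtype.ext (funext fun k => ?_)⟩
  change Submodule.Quotient.mk _ = z.1 k
  rw [← hc k, Submodule.Quotient.eq, hS k, add_sub_add_left_eq_sub, ← Finset.sum_sub_distrib]
  simp only [← sub_smul]
  exact sum_mem fun i _ => smul_mem_smul (hb i k) trivial

theorem toLimQuot_surjective_of_finite [Module.Finite A M] (hA : IsSeqComplete A I) :
    Surjective (toLimQuot A I M) :=
  let ⟨_, _, he⟩ := Module.Finite.exists_fin (R := A) (M := M)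
  toLimQuot_surjective_of_span_eq_top hA he

end Completeness

theorem stmt12 (B : ℕ → Type u) [∀ n, CommRing (B n)]
    (φ : ∀ n, B (n + 1) →+* B n)
    (π : ∀ n, A →+* B n)
    (hcompat : ∀ n, (φ n).comp (π (n + 1)) = π n)
    (hsurj : ∀ x : ∀ n, B n, (∀ n, φ n (x (n + 1)) = x n) → ∃ a : A, ∀ n, π n a = x n)
    (hI : ∀ n, I n = RingHom.ker (π n))
    (N : Type v) [AddCommGroup N] [Module A N]
    (hN : IsIComplete A I N)
    (M' : Submodule A N) (hM' : M'.FG) :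
    IsIComplete A I ↥M' :=
  have : Module.Finite A M' := Module.Finite.iff_fg.mpr hM'
  ⟨toLimQuot_injective_of_injective M'.subtype M'.injective_subtype hN.1,
    toLimQuot_surjective_of_finite (isSeqComplete_of_inverseLimit φ π hcompat hsurj hI)⟩
end

section
/- Let R = lim_n Z_p[[X_1,...,X_n]] (power series in countably many variables) and for each n let ι_n : R_n → R be the natural inclusion. If 𝔭 is a prime ideal of R_n, then the ideal of R generated by ι_n(𝔭) is a prime ideal of R. -/
open Finsupp Finset

namespace Stmt15Aux

/-! ### Generic antidiagonal splitting machinery -/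

section Split

variable {α β γ : Type*} {A : Type*}

/-- Restrict a monomial on `γ` along an injection `u : α → γ`. -/
noncomputable def low (u : α → γ) (hu : Function.Injective u) (D : γ →₀ ℕ) : α →₀ ℕ :=
  Finsupp.comapDomain u D hu.injOn

theorem low_apply (u : α → γ) (hu : Function.Injective u) (D : γ →₀ ℕ) (a : α) :
    low u hu D a = D (u a) := rfl

theorem low_mapDomain (u : α → γ) (hu : Function.Injective u) (e : α →₀ ℕ) :
    low u hu (Finsupp.mapDomain u e) = e := by
  ext a
  rw [low_apply, Finsupp.mapDomain_apply hu]

theorem low_add (u : α → γ) (hu : Function.Injective u) (D E : γ →₀ ℕ) :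
    low u hu (D + E) = low u hu D + low u hu E :=
  Finsupp.comapDomain_add_of_injective hu D E

theorem low_zero (u : α → γ) (hu : Function.Injective u) : low u hu (0 : γ →₀ ℕ) = 0 := by
  ext a; rfl

theorem mapDomain_low (u : α → γ) (hu : Function.Injective u) (D : γ →₀ ℕ)
    (hD : ∀ c, D c ≠ 0 → ∃ a, u a = c) :
    Finsupp.mapDomain u (low u hu D) = D := by
  refine Finsupp.mapDomain_comapDomain u hu D ?_
  intro c hc
  exact hD c (Finsupp.mem_support_iff.mp hc)

theorem low_mapDomain' (u : α → γ) (v : β → γ) (hu : Function.Injective u)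
    (huv : ∀ a b, u a ≠ v b) (d : β →₀ ℕ) : low u hu (Finsupp.mapDomain v d) = 0 := by
  ext a
  rw [low_apply, Finsupp.mapDomain_notin_range]
  · rfl
  · rintro ⟨b, hb⟩
    exact huv a b hb.symm

/-- Recombination: every monomial on `γ` splits into its `u`-part and `v`-part. -/
theorem recomb (u : α → γ) (v : β → γ) (hu : Function.Injective u) (hv : Function.Injective v)
    (huv : ∀ a b, u a ≠ v b) (hcover : ∀ c : γ, (∃ a, u a = c) ∨ (∃ b, v b = c)) (D : γ →₀ ℕ) :
    Finsupp.mapDomain u (low u hu D) + Finsupp.mapDomain v (low v hv D) = D := by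
  ext c
  rcases hcover c with ⟨a, rfl⟩ | ⟨b, rfl⟩
  · rw [Finsupp.add_apply, Finsupp.mapDomain_apply hu,
      Finsupp.mapDomain_notin_range, low_apply, add_zero]
    rintro ⟨b, hb⟩
    exact huv a b hb.symm
  · rw [Finsupp.add_apply, Finsupp.mapDomain_apply hv,
      Finsupp.mapDomain_notin_range, low_apply, zero_add]
    rintro ⟨a, ha⟩
    exact huv a b ha

theorem mapDomain_add_eq_zero_iff (u : α → γ) (v : β → γ) (hu : Function.Injective u)
    (hv : Function.Injective v) (huv : ∀ a b, u a ≠ v b) (e : α →₀ ℕ) (d : β →₀ ℕ) :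
    Finsupp.mapDomain u e + Finsupp.mapDomain v d = 0 ↔ e = 0 ∧ d = 0 := by
  constructor
  · intro h
    have h1 := congrArg (low u hu) h
    have h2 := congrArg (low v hv) h
    rw [low_add, low_mapDomain, low_mapDomain' u v hu huv, add_zero, low_zero] at h1
    rw [low_add, low_mapDomain, low_mapDomain' v u hv (fun b a => (huv a b).symm),
      zero_add, low_zero] at h2
    exact ⟨h1, h2⟩
  · rintro ⟨rfl, rfl⟩
    simp

/-- Splitting an antidiagonal sum over `γ` into a double sum over the two parts. -/
theorem prodsplit [DecidableEq α] [DecidableEq β] [DecidableEq γ] [AddCommMonoid A] (u : α → γ) (v : β → γ) (hu : Function.Injective u)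
    (hv : Function.Injective v) (huv : ∀ a b, u a ≠ v b)
    (hcover : ∀ c : γ, (∃ a, u a = c) ∨ (∃ b, v b = c)) (e : α →₀ ℕ) (d : β →₀ ℕ)
    (H : (γ →₀ ℕ) → (γ →₀ ℕ) → A) :
    ∑ p ∈ Finset.HasAntidiagonal.antidiagonal (Finsupp.mapDomain u e + Finsupp.mapDomain v d), H p.1 p.2 =
    ∑ q ∈ Finset.HasAntidiagonal.antidiagonal e, ∑ r ∈ Finset.HasAntidiagonal.antidiagonal d,
      H (Finsupp.mapDomain u q.1 + Finsupp.mapDomain v r.1)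
        (Finsupp.mapDomain u q.2 + Finsupp.mapDomain v r.2) := by
  classical
  rw [← Finset.sum_product']
  refine Finset.sum_nbij' (fun p => ((low u hu p.1, low u hu p.2), (low v hv p.1, low v hv p.2)))
    (fun q => (Finsupp.mapDomain u q.1.1 + Finsupp.mapDomain v q.2.1,
      Finsupp.mapDomain u q.1.2 + Finsupp.mapDomain v q.2.2)) ?_ ?_ ?_ ?_ ?_
  · intro p hp
    rw [Finset.HasAntidiagonal.mem_antidiagonal] at hp
    rw [Finset.mem_product, Finset.HasAntidiagonal.mem_antidiagonal, Finset.HasAntidiagonal.mem_antidiagonal]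
    constructor
    · have := congrArg (low u hu) hp
      rw [low_add, low_add, low_mapDomain, low_mapDomain' u v hu huv, add_zero] at this
      exact this
    · have := congrArg (low v hv) hp
      rw [low_add, low_add, low_mapDomain,
        low_mapDomain' v u hv (fun b a => (huv a b).symm), zero_add] at this
      exact this
  · intro q hq
    rw [Finset.mem_product, Finset.HasAntidiagonal.mem_antidiagonal, Finset.HasAntidiagonal.mem_antidiagonal] at hq
    rw [Finset.HasAntidiagonal.mem_antidiagonal, ← hq.1, ← hq.2, Finsupp.mapDomain_add, Finsupp.mapDomain_add]
    exact add_add_add_comm _ _ _ _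
  · intro p hp
    ext : 1 <;> exact recomb u v hu hv huv hcover _
  · intro q hq
    ext : 1 <;> ext : 1 <;>
      simp only [low_add, low_mapDomain, low_mapDomain' u v hu huv,
        low_mapDomain' v u hv (fun b a => (huv a b).symm), add_zero, zero_add]
  · intro p hp
    rw [recomb u v hu hv huv hcover p.1, recomb u v hu hv huv hcover p.2]

end Split

end Stmt15Aux

namespace Stmt15Aux

section SplitRing

open MvPowerSeries

variable {α β γ : Type*} [DecidableEq α] [DecidableEq β] [DecidableEq γ]
  {A : Type*} [CommRing A]
variable (u : α → γ) (v : β → γ) (hu : Function.Injective u) (hv : Function.Injective v)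
  (huv : ∀ a b, u a ≠ v b)
  (hcover : ∀ c : γ, (∃ a, u a = c) ∨ (∃ b, v b = c))

/-- The splitting map `A[[X_γ]] → (A[[X_β]])[[X_α]]`. -/
noncomputable def splitFun (f : MvPowerSeries γ A) : MvPowerSeries α (MvPowerSeries β A) :=
  fun e => fun d => f (Finsupp.mapDomain u e + Finsupp.mapDomain v d)

theorem coeff_splitFun (f : MvPowerSeries γ A) (e : α →₀ ℕ) (d : β →₀ ℕ) :
    MvPowerSeries.coeff d (MvPowerSeries.coeff e (splitFun u v f)) =
      MvPowerSeries.coeff (Finsupp.mapDomain u e + Finsupp.mapDomain v d) f := rfl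

/-- The splitting map as a ring homomorphism. -/
noncomputable def splitRingHom :
    MvPowerSeries γ A →+* MvPowerSeries α (MvPowerSeries β A) where
  toFun := splitFun u v
  map_one' := by
    apply MvPowerSeries.ext; intro e
    apply MvPowerSeries.ext; intro d
    rw [coeff_splitFun, MvPowerSeries.coeff_one, MvPowerSeries.coeff_one]
    by_cases he : e = 0
    · by_cases hd : d = 0
      · subst he; subst hd
        simp [MvPowerSeries.coeff_one]
      · rw [if_pos he, MvPowerSeries.coeff_one, if_neg hd, if_neg]
        rw [mapDomain_add_eq_zero_iff u v hu hv huv]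
        tauto
    · rw [if_neg he, map_zero, if_neg]
      rw [mapDomain_add_eq_zero_iff u v hu hv huv]
      tauto
  map_mul' := fun f g => by
    apply MvPowerSeries.ext; intro e
    apply MvPowerSeries.ext; intro d
    rw [coeff_splitFun, MvPowerSeries.coeff_mul, MvPowerSeries.coeff_mul]
    rw [prodsplit u v hu hv huv hcover e d
      (fun D1 D2 => MvPowerSeries.coeff D1 f * MvPowerSeries.coeff D2 g)]
    rw [map_sum]
    refine Finset.sum_congr rfl fun q hq => ?_
    rw [MvPowerSeries.coeff_mul]
    refine Finset.sum_congr rfl fun r hr => ?_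
    rw [coeff_splitFun, coeff_splitFun]
  map_zero' := by
    apply MvPowerSeries.ext; intro e
    apply MvPowerSeries.ext; intro d
    rw [coeff_splitFun]
    simp
  map_add' := fun f g => by
    apply MvPowerSeries.ext; intro e
    apply MvPowerSeries.ext; intro d
    rw [coeff_splitFun]
    simp only [map_add, coeff_splitFun]

theorem splitRingHom_bijective :
    Function.Bijective (splitRingHom u v hu hv huv hcover (A := A)) := by
  constructor
  · intro f g h
    apply MvPowerSeries.ext; intro D
    have := congrArg (fun F => MvPowerSeries.coeff (low v hv D)
      (MvPowerSeries.coeff (low u hu D) F)) h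
    simpa only [splitRingHom, RingHom.coe_mk, MonoidHom.coe_mk, OneHom.coe_mk, coeff_splitFun,
      recomb u v hu hv huv hcover D] using this
  · intro g
    refine ⟨fun D => MvPowerSeries.coeff (low v hv D)
      (MvPowerSeries.coeff (low u hu D) g), ?_⟩
    apply MvPowerSeries.ext; intro e
    apply MvPowerSeries.ext; intro d
    rw [show (MvPowerSeries.coeff d) ((MvPowerSeries.coeff e)
        ((splitRingHom u v hu hv huv hcover) fun D => (MvPowerSeries.coeff (low v hv D))
          ((MvPowerSeries.coeff (low u hu D)) g))) =
      (MvPowerSeries.coeff (low v hv (Finsupp.mapDomain u e + Finsupp.mapDomain v d)))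
        ((MvPowerSeries.coeff
          (low u hu (Finsupp.mapDomain u e + Finsupp.mapDomain v d))) g) from rfl]
    rw [low_add, low_add, low_mapDomain, low_mapDomain' u v hu huv,
      low_mapDomain, low_mapDomain' v u hv (fun b a => (huv a b).symm), add_zero, zero_add]

/-- The splitting ring isomorphism `A[[X_γ]] ≃ (A[[X_β]])[[X_α]]`. -/
noncomputable def splitEquiv : MvPowerSeries γ A ≃+* MvPowerSeries α (MvPowerSeries β A) :=
  RingEquiv.ofBijective _ (splitRingHom_bijective u v hu hv huv hcover)

end SplitRing

end Stmt15Aux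

namespace Stmt15Aux

section Hilbert

open PowerSeries

variable (A : Type*) [CommRing A] [IsNoetherianRing A]

/-- Hilbert basis theorem for power series rings. -/
theorem powerSeries_isNoetherianRing : IsNoetherianRing (PowerSeries A) := by
  rw [isNoetherianRing_iff_ideal_fg]
  intro I
  classical
  -- the ideal of `k`-th coefficients of elements of `I` of order `≥ k`
  let J : ℕ → Ideal A := fun k =>
    { carrier := {a | ∃ f ∈ I, (∀ j < k, coeff j f = 0) ∧ coeff k f = a}
      add_mem' := by
        rintro x y ⟨f, hfI, hford, hfc⟩ ⟨g, hgI, hgord, hgc⟩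
        exact ⟨f + g, I.add_mem hfI hgI,
          fun j hj => by rw [map_add, hford j hj, hgord j hj, add_zero],
          by rw [map_add, hfc, hgc]⟩
      zero_mem' := ⟨0, I.zero_mem, by simp, by simp⟩
      smul_mem' := by
        rintro c x ⟨f, hfI, hford, hfc⟩
        refine ⟨C c * f, I.mul_mem_left _ hfI, fun j hj => ?_, ?_⟩
        · rw [coeff_C_mul, hford j hj, mul_zero]
        · rw [coeff_C_mul, hfc]; rfl }
  have hJmem : ∀ k (a : A), a ∈ J k ↔
      ∃ f ∈ I, (∀ j < k, coeff j f = 0) ∧ coeff k f = a := fun k a => Iff.rfl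
  have hJmono : Monotone J := by
    intro k l hkl x hx
    rw [hJmem] at hx ⊢
    obtain ⟨f, hfI, hford, hfc⟩ := hx
    refine ⟨X ^ (l - k) * f, I.mul_mem_left _ hfI, fun j hj => ?_, ?_⟩
    · rw [coeff_X_pow_mul']
      split_ifs with h
      · exact hford _ (by omega)
      · rfl
    · rw [coeff_X_pow_mul', if_pos (by omega), show l - (l - k) = k by omega, hfc]
  obtain ⟨N, hN⟩ := monotone_stabilizes_iff_noetherian.mpr
    (inferInstance : IsNoetherian A A) ⟨J, hJmono⟩
  have hJeq : ∀ m, N ≤ m → J N = J m := hN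
  -- generators of the coefficient ideals
  have hsex : ∀ k, ∃ s : Finset A, Ideal.span (↑s : Set A) = J k := fun k => by
    obtain ⟨s, hs⟩ := IsNoetherian.noetherian (J k)
    exact ⟨s, hs⟩
  choose s hs using hsex
  have hsJ : ∀ k, ∀ a ∈ s k, a ∈ J k := fun k a ha => by
    rw [← hs k]; exact Ideal.subset_span ha
  -- witnesses
  have hwex : ∀ k (a : A), ∃ f : PowerSeries A, a ∈ s k →
      f ∈ I ∧ (∀ j < k, coeff j f = 0) ∧ coeff k f = a := fun k a => by
    by_cases h : a ∈ s k
    · obtain ⟨f, h1, h2, h3⟩ := hsJ k a h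
      exact ⟨f, fun _ => ⟨h1, h2, h3⟩⟩
    · exact ⟨0, fun h' => absurd h' h⟩
  choose w hw using hwex
  set G : Finset (PowerSeries A) := (Finset.range (N + 1)).biUnion
    (fun k => (s k).image (w k)) with hG
  have hGI : ∀ g ∈ G, g ∈ (I : Set (PowerSeries A)) := by
    intro g hg
    rw [hG, Finset.mem_biUnion] at hg
    obtain ⟨k, -, hg⟩ := hg
    obtain ⟨a, ha, rfl⟩ := Finset.mem_image.mp hg
    exact (hw k a ha).1
  have hwG : ∀ k, k ≤ N → ∀ a ∈ s k, w k a ∈ Ideal.span (↑G : Set (PowerSeries A)) := by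
    intro k hk a ha
    refine Ideal.subset_span ?_
    rw [hG]
    exact Finset.mem_coe.mpr (Finset.mem_biUnion.mpr ⟨k, Finset.mem_range.mpr (by omega),
      Finset.mem_image.mpr ⟨a, ha, rfl⟩⟩)
  -- a vanishing lemma for products
  have hmul0 : ∀ (φ ψ : PowerSeries A) (M : ℕ), (∀ i ≤ M, coeff i φ = 0) →
      coeff M (φ * ψ) = 0 := by
    intro φ ψ M h
    rw [coeff_mul]
    refine Finset.sum_eq_zero fun p hp => ?_
    rw [Finset.HasAntidiagonal.mem_antidiagonal] at hp
    rw [h p.1 (by omega), zero_mul]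
  -- low coefficients of combinations of the `w k` witnesses
  have hcomb : ∀ (k : ℕ) (c : A → A) (j : ℕ),
      coeff j (∑ a ∈ s k, C (c a) * w k a) = ∑ a ∈ s k, c a * coeff j (w k a) := by
    intro k c j
    rw [map_sum]
    exact Finset.sum_congr rfl fun a ha => coeff_C_mul _ _ _
  -- Phase 2 : elements of order ≥ N
  have phase2 : ∀ f ∈ I, (∀ j < N, coeff j f = 0) →
      f ∈ Ideal.span (↑G : Set (PowerSeries A)) := by
    intro f hfI hford
    -- choice of span representations
    have hχex : ∀ x : A, ∃ c : A → A, x ∈ J N → ∑ a ∈ s N, c a * a = x := fun x => by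
      by_cases h : x ∈ J N
      · have hx' : x ∈ Ideal.span (↑(s N) : Set A) := by rw [hs N]; exact h
        obtain ⟨c, -, hc⟩ := Submodule.mem_span_finset.mp hx' 
        exact ⟨c, fun _ => by simpa [smul_eq_mul] using hc⟩
      · exact ⟨0, fun h' => absurd h' h⟩
    choose χ hχ using hχex
    -- successive remainders
    obtain ⟨rem, hrem0, hremS⟩ : ∃ rem : ℕ → PowerSeries A, rem 0 = f ∧ ∀ t,
        rem (t + 1) = rem t - X ^ t * ∑ a ∈ s N, C (χ (coeff (N + t) (rem t)) a) * w N a :=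
      ⟨fun t => Nat.rec f
        (fun t g => g - X ^ t * ∑ a ∈ s N, C (χ (coeff (N + t) g) a) * w N a) t,
        rfl, fun t => rfl⟩
    have hinv : ∀ t, rem t ∈ I ∧ ∀ j, j < N + t → coeff j (rem t) = 0 := by
      intro t
      induction t with
      | zero => exact ⟨hrem0 ▸ hfI, fun j hj => hrem0 ▸ hford j (by omega)⟩
      | succ t ih =>
        have hxJ : coeff (N + t) (rem t) ∈ J N := by
          rw [hJeq (N + t) (by omega)]
          exact ⟨rem t, ih.1, fun j hj => ih.2 j hj, rfl⟩
        have hsum := hχ _ hxJ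
        constructor
        · rw [hremS t]
          exact I.sub_mem ih.1 (I.mul_mem_left _
            (Ideal.sum_mem I fun a ha => I.mul_mem_left _ (hw N a ha).1))
        · intro j hj
          rw [hremS t, map_sub]
          rcases lt_or_eq_of_le (Nat.lt_succ_iff.mp (by omega : j < N + t + 1)) with h | h
          · rw [ih.2 j h, coeff_X_pow_mul', zero_sub, neg_eq_zero]
            split_ifs with ht
            · rw [hcomb]
              refine Finset.sum_eq_zero fun a ha => ?_
              rw [(hw N a ha).2.1 (j - t) (by omega), mul_zero]
            · rfl
          · subst h
            rw [coeff_X_pow_mul', if_pos (by omega), show N + t - t = N by omega, hcomb]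
            have : ∑ a ∈ s N, χ (coeff (N + t) (rem t)) a * coeff N (w N a)
                = ∑ a ∈ s N, χ (coeff (N + t) (rem t)) a * a :=
              Finset.sum_congr rfl fun a ha => by rw [(hw N a ha).2.2]
            rw [this, hsum, sub_self]
    -- the limit coefficients
    obtain ⟨uu, huu⟩ : ∃ uu : A → PowerSeries A, ∀ a t,
        coeff t (uu a) = χ (coeff (N + t) (rem t)) a :=
      ⟨fun a => PowerSeries.mk fun t => χ (coeff (N + t) (rem t)) a,
        fun a t => coeff_mk _ _⟩
    obtain ⟨vv, hvv0, hvvS⟩ : ∃ vv : ℕ → A → PowerSeries A, (∀ a, vv 0 a = 0) ∧ ∀ t a,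
        vv (t + 1) a = vv t a + C (χ (coeff (N + t) (rem t)) a) * X ^ t :=
      ⟨fun t a => ∑ i ∈ Finset.range t, C (χ (coeff (N + i) (rem i)) a) * X ^ i,
        fun a => Finset.sum_range_zero _, fun t a => Finset.sum_range_succ _ t⟩
    have hvvhigh : ∀ t a i, t ≤ i → coeff i (vv t a) = 0 := by
      intro t
      induction t with
      | zero => intro a i hi; rw [hvv0]; simp
      | succ t ih =>
        intro a i hi
        rw [hvvS t a, map_add, coeff_C_mul_X_pow, ih a i (by omega), if_neg (by omega), add_zero]
    have hvvcoeff : ∀ t a i, i < t → coeff i (vv t a) = χ (coeff (N + i) (rem i)) a := by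
      intro t
      induction t with
      | zero => intro a i hi; omega
      | succ t ih =>
        intro a i hi
        rw [hvvS t a, map_add, coeff_C_mul_X_pow]
        rcases lt_or_eq_of_le (Nat.lt_succ_iff.mp hi) with h | h
        · rw [ih a i h, if_neg (by omega), add_zero]
        · subst h
          rw [hvvhigh i a i le_rfl, if_pos rfl, zero_add]
    -- partial sums reproduce the remainders
    have hrep : ∀ t, f - ∑ a ∈ s N, vv t a * w N a = rem t := by
      intro t
      induction t with
      | zero =>
        rw [hrem0]
        have : ∑ a ∈ s N, vv 0 a * w N a = 0 :=
          Finset.sum_eq_zero fun a ha => by rw [hvv0, zero_mul]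
        rw [this, sub_zero]
      | succ t ih =>
        have expand : ∀ a : A, vv (t + 1) a * w N a = vv t a * w N a +
            X ^ t * (C (χ (coeff (N + t) (rem t)) a) * w N a) := by
          intro a
          rw [hvvS t a, add_mul]
          ring
        rw [Finset.sum_congr rfl fun a _ => expand a, Finset.sum_add_distrib,
          ← Finset.mul_sum, hremS t, ← ih]
        ring
    have hfinal : f = ∑ a ∈ s N, uu a * w N a := by
      have hdiff : ∀ M : ℕ, coeff M (f - ∑ a ∈ s N, uu a * w N a) = 0 := by
        intro M
        have h1 : f - ∑ a ∈ s N, uu a * w N a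
            = rem (M + 1) + ∑ a ∈ s N, (vv (M + 1) a - uu a) * w N a := by
          rw [← hrep (M + 1)]
          have : ∑ a ∈ s N, (vv (M + 1) a - uu a) * w N a
              = ∑ a ∈ s N, vv (M + 1) a * w N a - ∑ a ∈ s N, uu a * w N a := by
            rw [← Finset.sum_sub_distrib]
            exact Finset.sum_congr rfl fun a _ => sub_mul _ _ _
          rw [this]
          ring
        rw [h1, map_add, (hinv (M + 1)).2 M (by omega), zero_add, map_sum]
        refine Finset.sum_eq_zero fun a ha => ?_
        refine hmul0 _ _ _ fun i hi => ?_
        rw [map_sub, hvvcoeff (M + 1) a i (by omega), huu a i, sub_self]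
      have hz : f - ∑ a ∈ s N, uu a * w N a = 0 := PowerSeries.ext fun M => by
        rw [hdiff M, map_zero]
      exact sub_eq_zero.mp hz
    rw [hfinal]
    exact Ideal.sum_mem _ fun a ha => Ideal.mul_mem_left _ _ (hwG N le_rfl a ha)
  -- Phase 1 : descending induction to order 0
  have phase1 : ∀ t k, k + t = N → ∀ f ∈ I, (∀ j < k, coeff j f = 0) →
      f ∈ Ideal.span (↑G : Set (PowerSeries A)) := by
    intro t
    induction t with
    | zero =>
      intro k hk f hfI hford
      exact phase2 f hfI (by rw [show N = k by omega]; exact hford)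
    | succ t ih =>
      intro k hk f hfI hford
      have hxJ : coeff k f ∈ J k := ⟨f, hfI, hford, rfl⟩
      have hx' : coeff k f ∈ Ideal.span (↑(s k) : Set A) := by rw [hs k]; exact hxJ
      obtain ⟨c, -, hc⟩ := Submodule.mem_span_finset.mp hx' 
      simp only [smul_eq_mul] at hc
      have hg : f - ∑ a ∈ s k, C (c a) * w k a ∈ Ideal.span (↑G : Set (PowerSeries A)) := by
        refine ih (k + 1) (by omega) _ (I.sub_mem hfI (Ideal.sum_mem I fun a ha =>
          I.mul_mem_left _ (hw k a ha).1)) ?_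
        intro j hj
        rw [map_sub, hcomb]
        rcases lt_or_eq_of_le (Nat.lt_succ_iff.mp hj) with h | h
        · rw [hford j h, zero_sub, neg_eq_zero]
          refine Finset.sum_eq_zero fun a ha => ?_
          rw [(hw k a ha).2.1 j h, mul_zero]
        · subst h
          have : ∑ a ∈ s j, c a * coeff j (w j a) = ∑ a ∈ s j, c a * a :=
            Finset.sum_congr rfl fun a ha => by rw [(hw j a ha).2.2]
          rw [this, hc, sub_self]
      have hfeq : f = (f - ∑ a ∈ s k, C (c a) * w k a) + ∑ a ∈ s k, C (c a) * w k a := by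
        ring
      rw [hfeq]
      exact Ideal.add_mem _ hg (Ideal.sum_mem _ fun a ha =>
        Ideal.mul_mem_left _ _ (hwG k (by omega) a ha))
  exact ⟨G, le_antisymm (Ideal.span_le.mpr hGI)
    (fun f hf => phase1 N 0 (by omega) f hf (fun j hj => absurd hj (Nat.not_lt_zero j)))⟩

end Hilbert

end Stmt15Aux

namespace Stmt15Aux

theorem mvPowerSeries_fin_isNoetherianRing (A : Type*) [CommRing A] [IsNoetherianRing A] :
    ∀ k : ℕ, IsNoetherianRing (MvPowerSeries (Fin k) A)
  | 0 => by
    have hbij : Function.Bijective (MvPowerSeries.C (σ := Fin 0) (R := A)) := by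
      constructor
      · intro x y h
        have := congrArg (MvPowerSeries.constantCoeff (σ := Fin 0) (R := A)) h
        rwa [MvPowerSeries.constantCoeff_C, MvPowerSeries.constantCoeff_C] at this
      · intro f
        refine ⟨MvPowerSeries.constantCoeff (σ := Fin 0) (R := A) f, ?_⟩
        apply MvPowerSeries.ext
        intro d
        rw [Subsingleton.elim d 0, MvPowerSeries.coeff_zero_C]
        rfl
    exact isNoetherianRing_of_ringEquiv A (RingEquiv.ofBijective _ hbij)
  | (k + 1) => by
    haveI := mvPowerSeries_fin_isNoetherianRing A k
    haveI : IsNoetherianRing (MvPowerSeries Unit (MvPowerSeries (Fin k) A)) :=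
      powerSeries_isNoetherianRing (MvPowerSeries (Fin k) A)
    refine isNoetherianRing_of_ringEquiv _
      (splitEquiv (fun _ : Unit => Fin.last k) (Fin.castSucc : Fin k → Fin (k + 1))
        (fun a b _ => rfl) (Fin.castSucc_injective k)
        (fun a b => (Fin.castSucc_lt_last b).ne') ?_).symm
    intro c
    by_cases h : c = Fin.last k
    · exact Or.inl ⟨(), h.symm⟩
    · exact Or.inr ⟨⟨c.val, Fin.val_lt_last h⟩, Fin.ext rfl⟩

end Stmt15Aux

namespace Stmt15Aux

section SumEmb

variable {α γ : Type*} [DecidableEq α] [DecidableEq γ] {A : Type*} [AddCommMonoid A]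

/-- Antidiagonal sums along an embedded monomial. -/
theorem sum_antidiagonal_mapDomain (u : α → γ) (hu : Function.Injective u) (e : α →₀ ℕ)
    (H : (γ →₀ ℕ) → (γ →₀ ℕ) → A) :
    ∑ p ∈ Finset.HasAntidiagonal.antidiagonal (Finsupp.mapDomain u e), H p.1 p.2 =
      ∑ q ∈ Finset.HasAntidiagonal.antidiagonal e, H (Finsupp.mapDomain u q.1) (Finsupp.mapDomain u q.2) := by
  have key : ∀ p : (γ →₀ ℕ) × (γ →₀ ℕ), p.1 + p.2 = Finsupp.mapDomain u e →
      Finsupp.mapDomain u (low u hu p.1) = p.1 ∧ Finsupp.mapDomain u (low u hu p.2) = p.2 := by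
    intro p hp
    constructor <;>
    · refine mapDomain_low u hu _ fun c hc => ?_
      by_contra hnc
      have h0 : Finsupp.mapDomain u e c = 0 :=
        Finsupp.mapDomain_notin_range _ _ (fun ⟨a, ha⟩ => hnc ⟨a, ha⟩)
      have hsum : p.1 c + p.2 c = 0 := by
        rw [← Finsupp.add_apply, hp, h0]
      omega
  refine Finset.sum_nbij' (fun p => (low u hu p.1, low u hu p.2))
    (fun q => (Finsupp.mapDomain u q.1, Finsupp.mapDomain u q.2)) ?_ ?_ ?_ ?_ ?_
  · intro p hp
    rw [Finset.HasAntidiagonal.mem_antidiagonal] at hp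
    rw [Finset.HasAntidiagonal.mem_antidiagonal, ← low_add u hu, hp, low_mapDomain]
  · intro q hq
    rw [Finset.HasAntidiagonal.mem_antidiagonal] at hq
    rw [Finset.HasAntidiagonal.mem_antidiagonal, ← Finsupp.mapDomain_add, hq]
  · intro p hp
    rw [Finset.HasAntidiagonal.mem_antidiagonal] at hp
    exact Prod.ext (key p hp).1 (key p hp).2
  · intro q hq
    exact Prod.ext (low_mapDomain u hu _) (low_mapDomain u hu _)
  · intro p hp
    rw [Finset.HasAntidiagonal.mem_antidiagonal] at hp
    rw [(key p hp).1, (key p hp).2]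

end SumEmb

section Limit

open MvPowerSeries

variable {A : Type*} [CommRing A] {R : Type} [CommRing R]
variable (τ : ∀ n, MvPowerSeries (Fin (n + 1)) A →+* MvPowerSeries (Fin n) A)
variable (π : ∀ n, R →+* MvPowerSeries (Fin n) A)

/-- A bound beyond the support of `D`. -/
def bnd (D : ℕ →₀ ℕ) : ℕ := D.support.sup id + 1

theorem lt_bnd (D : ℕ →₀ ℕ) (i : ℕ) (hi : D i ≠ 0) : i < bnd D :=
  Nat.lt_succ_of_le (Finset.le_sup (f := id) (Finsupp.mem_support_iff.mpr hi))

/-- The coefficient function of an element of the limit ring. -/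
noncomputable def cf (a : R) (D : ℕ →₀ ℕ) : A :=
  MvPowerSeries.coeff (low (Fin.val : Fin (bnd D) → ℕ) Fin.val_injective D) (π (bnd D) a)

variable (hτ : ∀ n (f : MvPowerSeries (Fin (n + 1)) A) (d : Fin n →₀ ℕ),
    MvPowerSeries.coeff d (τ n f) =
      MvPowerSeries.coeff (Finsupp.mapDomain Fin.castSucc d) f)
  (hcompat : ∀ n, (τ n).comp (π (n + 1)) = π n)

theorem mapDomain_val_low (m : ℕ) (D : ℕ →₀ ℕ) (hD : ∀ i, D i ≠ 0 → i < m) :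
    Finsupp.mapDomain Fin.val (low (Fin.val : Fin m → ℕ) Fin.val_injective D) = D :=
  mapDomain_low _ _ _ fun c hc => ⟨⟨c, hD c hc⟩, rfl⟩

include hτ hcompat in
theorem coeff_pi_mono (a : R) (m m' : ℕ) (h : m ≤ m') (d : Fin m →₀ ℕ) :
    MvPowerSeries.coeff (Finsupp.mapDomain (Fin.castLE h) d) (π m' a) =
      MvPowerSeries.coeff d (π m a) := by
  induction m', h using Nat.le_induction with
  | base =>
    rw [show (Fin.castLE (le_refl m) : Fin m → Fin m) = id from funext fun i => Fin.ext rfl,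
      Finsupp.mapDomain_id]
  | succ m' hm ih =>
    rw [show (Fin.castLE (by omega) : Fin m → Fin (m' + 1)) =
        Fin.castSucc ∘ Fin.castLE hm from funext fun i => Fin.ext rfl,
      Finsupp.mapDomain_comp, ← hτ m' (π (m' + 1) a) (Finsupp.mapDomain (Fin.castLE hm) d),
      show τ m' (π (m' + 1) a) = π m' a from RingHom.congr_fun (hcompat m') a, ih]

include hτ hcompat in
theorem cf_spec (a : R) (m : ℕ) (d : Fin m →₀ ℕ) :
    cf π a (Finsupp.mapDomain Fin.val d) = MvPowerSeries.coeff d (π m a) := by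
  set D := Finsupp.mapDomain (Fin.val : Fin m → ℕ) d with hDdef
  have hDlt : ∀ i, D i ≠ 0 → i < bnd D := lt_bnd D
  have hDm : ∀ i, D i ≠ 0 → i < m := by
    intro i hi
    by_contra hge
    exact hi (Finsupp.mapDomain_notin_range _ _ (by
      rintro ⟨j, rfl⟩
      exact hge j.isLt))
  show MvPowerSeries.coeff (low (Fin.val : Fin (bnd D) → ℕ) Fin.val_injective D)
    (π (bnd D) a) = _
  rw [← coeff_pi_mono τ π hτ hcompat a (bnd D) (max (bnd D) m) (le_max_left _ _),
    ← coeff_pi_mono τ π hτ hcompat a m (max (bnd D) m) (le_max_right _ _)]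
  suffices h : Finsupp.mapDomain (Fin.castLE (le_max_left (bnd D) m))
      (low (Fin.val : Fin (bnd D) → ℕ) Fin.val_injective D)
      = Finsupp.mapDomain (Fin.castLE (le_max_right (bnd D) m)) d by rw [h]
  apply Finsupp.mapDomain_injective (Fin.val_injective (n := max (bnd D) m))
  have c1 : ∀ (k : ℕ) (hk : k ≤ max (bnd D) m) (x : Fin k →₀ ℕ),
      Finsupp.mapDomain Fin.val (Finsupp.mapDomain (Fin.castLE hk) x)
        = Finsupp.mapDomain (Fin.val : Fin k → ℕ) x := by
    intro k hk x
    rw [← Finsupp.mapDomain_comp,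
      show ((Fin.val : Fin (max (bnd D) m) → ℕ) ∘ (Fin.castLE hk : Fin k → Fin (max (bnd D) m)))
        = (Fin.val : Fin k → ℕ) from funext fun i => rfl]
  rw [c1 (bnd D) (le_max_left _ _), c1 m (le_max_right _ _), mapDomain_val_low (bnd D) D hDlt]

include hτ hcompat in
theorem cf_mul (a b : R) (D : ℕ →₀ ℕ) :
    cf π (a * b) D = ∑ p ∈ Finset.HasAntidiagonal.antidiagonal D, cf π a p.1 * cf π b p.2 := by
  classical
  have hD : Finsupp.mapDomain Fin.val
      (low (Fin.val : Fin (bnd D) → ℕ) Fin.val_injective D) = D :=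
    mapDomain_val_low (bnd D) D (lt_bnd D)
  have step1 : cf π (a * b) D = MvPowerSeries.coeff
      (low (Fin.val : Fin (bnd D) → ℕ) Fin.val_injective D) (π (bnd D) (a * b)) := rfl
  have step2 : ∑ p ∈ Finset.HasAntidiagonal.antidiagonal D, cf π a p.1 * cf π b p.2
      = ∑ q ∈ Finset.HasAntidiagonal.antidiagonal (low (Fin.val : Fin (bnd D) → ℕ) Fin.val_injective D),
          cf π a (Finsupp.mapDomain Fin.val q.1) * cf π b (Finsupp.mapDomain Fin.val q.2) := by
    conv_lhs => rw [← hD]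
    rw [sum_antidiagonal_mapDomain (Fin.val : Fin (bnd D) → ℕ) Fin.val_injective _
      (fun D1 D2 => cf π a D1 * cf π b D2)]
  rw [step1, step2, map_mul, MvPowerSeries.coeff_mul]
  exact (Finset.sum_congr rfl fun q hq => by
    rw [cf_spec τ π hτ hcompat, cf_spec τ π hτ hcompat]).symm

theorem cf_add (a b : R) (D : ℕ →₀ ℕ) : cf π (a + b) D = cf π a D + cf π b D := by
  show MvPowerSeries.coeff _ (π (bnd D) (a + b)) = _
  rw [map_add, map_add]
  rfl

include hτ hcompat in
theorem cf_one (D : ℕ →₀ ℕ) : cf π (1 : R) D = if D = 0 then 1 else 0 := by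
  classical
  have hD : Finsupp.mapDomain Fin.val
      (low (Fin.val : Fin (bnd D) → ℕ) Fin.val_injective D) = D :=
    mapDomain_val_low (bnd D) D (lt_bnd D)
  show MvPowerSeries.coeff _ (π (bnd D) 1) = _
  rw [map_one, MvPowerSeries.coeff_one]
  congr 1
  simp only [eq_iff_iff]
  constructor
  · intro h
    rw [← hD, h, Finsupp.mapDomain_zero]
  · intro h
    subst h
    exact low_zero _ _

include hτ hcompat in
theorem cf_injective (a b : R) (hab : ∀ D, cf π a D = cf π b D)
    (hinj : ∀ x : R, (∀ n, π n x = 0) → x = 0) : a = b := by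
  have : a - b = 0 := by
    apply hinj
    intro m
    apply MvPowerSeries.ext
    intro d
    rw [map_sub, map_zero, map_sub, sub_eq_zero, ← cf_spec τ π hτ hcompat a m d,
      ← cf_spec τ π hτ hcompat b m d]
    exact hab _
  exact sub_eq_zero.mp this

include hτ in
theorem cf_surjective
    (hsurj : ∀ x : ∀ n, MvPowerSeries (Fin n) A,
      (∀ n, τ n (x (n + 1)) = x n) → ∃ a : R, ∀ n, π n a = x n)
    (C : (ℕ →₀ ℕ) → A) : ∃ r : R, ∀ m (d : Fin m →₀ ℕ),
      MvPowerSeries.coeff d (π m r) = C (Finsupp.mapDomain Fin.val d) := by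
  obtain ⟨r, hr⟩ := hsurj
    (fun m => ((fun d => C (Finsupp.mapDomain Fin.val d)) : MvPowerSeries (Fin m) A))
    (by
      intro m
      apply MvPowerSeries.ext
      intro d
      refine (hτ m _ d).trans ?_
      show C (Finsupp.mapDomain Fin.val (Finsupp.mapDomain Fin.castSucc d))
        = C (Finsupp.mapDomain Fin.val d)
      rw [← Finsupp.mapDomain_comp,
        show ((Fin.val : Fin (m + 1) → ℕ) ∘ (Fin.castSucc : Fin m → Fin (m + 1)))
          = (Fin.val : Fin m → ℕ) from funext fun i => rfl])
  refine ⟨r, fun m d => ?_⟩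
  rw [hr m]
  rfl

/-- The coefficient-wise embedding of the limit ring into a big power series ring. -/
noncomputable def phiHom (hinj : ∀ x : R, (∀ n, π n x = 0) → x = 0) :
    R →+* MvPowerSeries ℕ A where
  toFun a := fun D => cf π a D
  map_one' := by
    apply MvPowerSeries.ext
    intro D
    rw [MvPowerSeries.coeff_one]
    show cf π 1 D = _
    classical
    rw [cf_one τ π hτ hcompat]
  map_mul' a b := by
    classical
    apply MvPowerSeries.ext
    intro D
    erw [MvPowerSeries.coeff_mul]
    show cf π (a * b) D = _
    rw [cf_mul τ π hτ hcompat]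
    rfl
  map_zero' := by
    apply MvPowerSeries.ext
    intro D
    rw [map_zero]
    show cf π 0 D = 0
    show MvPowerSeries.coeff _ (π (bnd D) 0) = 0
    rw [map_zero, map_zero]
  map_add' a b := by
    apply MvPowerSeries.ext
    intro D
    erw [map_add]
    show cf π (a + b) D = _
    rw [cf_add π a b D]
    rfl

theorem coeff_phiHom (hinj : ∀ x : R, (∀ n, π n x = 0) → x = 0) (a : R) (D : ℕ →₀ ℕ) :
    MvPowerSeries.coeff D (phiHom τ π hτ hcompat hinj a) = cf π a D := rfl

end Limit

end Stmt15Aux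

namespace Stmt15Aux

section Main

open MvPowerSeries

variable {A : Type*} [CommRing A] {R : Type} [CommRing R]

theorem map_iota_isPrime
    (τ : ∀ n, MvPowerSeries (Fin (n + 1)) A →+* MvPowerSeries (Fin n) A)
    (hτ : ∀ n (f : MvPowerSeries (Fin (n + 1)) A) (d : Fin n →₀ ℕ),
      MvPowerSeries.coeff d (τ n f) =
        MvPowerSeries.coeff (Finsupp.mapDomain Fin.castSucc d) f)
    (π : ∀ n, R →+* MvPowerSeries (Fin n) A)
    (hcompat : ∀ n, (τ n).comp (π (n + 1)) = π n)
    (hinj : ∀ a : R, (∀ n, π n a = 0) → a = 0)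
    (hsurj : ∀ x : ∀ n, MvPowerSeries (Fin n) A,
      (∀ n, τ n (x (n + 1)) = x n) → ∃ a : R, ∀ n, π n a = x n)
    (n : ℕ) (ι : MvPowerSeries (Fin n) A →+* R)
    (hsec : (π n).comp ι = RingHom.id _)
    (hι' : ∀ (f : MvPowerSeries (Fin n) A) (m : ℕ) (_ : n ≤ m) (d : Fin m →₀ ℕ),
      (∃ i : Fin m, d i ≠ 0 ∧ n ≤ (i : ℕ)) →
        MvPowerSeries.coeff d (π m (ι f)) = 0)
    (𝔭 : Ideal (MvPowerSeries (Fin n) A)) (h𝔭 : 𝔭.IsPrime) (h𝔭fg : 𝔭.FG) :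
    (Ideal.map ι 𝔭).IsPrime := by
  classical
  haveI := h𝔭
  -- the two index injections
  set u : ℕ → ℕ := fun i => n + i with hu_def
  have hu : Function.Injective u := fun x y h => by simpa [hu_def] using h
  have hv : Function.Injective (Fin.val : Fin n → ℕ) := Fin.val_injective
  have huv : ∀ (a : ℕ) (b : Fin n), u a ≠ (b : ℕ) := fun a b h => by
    have := b.isLt
    simp only [hu_def] at h
    omega
  have hcover : ∀ c : ℕ, (∃ a, u a = c) ∨ (∃ b : Fin n, (b : ℕ) = c) := by
    intro c
    by_cases h : c < n
    · exact Or.inr ⟨⟨c, h⟩, rfl⟩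
    · exact Or.inl ⟨c - n, by simp only [hu_def]; omega⟩
  -- the big composite homomorphism
  set Θ : R →+* MvPowerSeries ℕ (MvPowerSeries (Fin n) A ⧸ 𝔭) :=
    (MvPowerSeries.map (σ := ℕ) (Ideal.Quotient.mk 𝔭)).comp
      ((splitRingHom u (Fin.val : Fin n → ℕ) hu hv huv hcover).comp
        (phiHom τ π hτ hcompat hinj)) with hΘ_def
  -- the coefficient series of an element of `R`
  have glex : ∀ (a : R) (d : ℕ →₀ ℕ), ∃ gl : MvPowerSeries (Fin n) A,
      (∀ e : Fin n →₀ ℕ, MvPowerSeries.coeff e gl =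
        cf π a (Finsupp.mapDomain u d + Finsupp.mapDomain Fin.val e)) ∧
      MvPowerSeries.coeff d (Θ a) = Ideal.Quotient.mk 𝔭 gl := by
    intro a d
    refine ⟨(fun e => cf π a (Finsupp.mapDomain u d + Finsupp.mapDomain Fin.val e) :
      MvPowerSeries (Fin n) A), fun e => rfl, ?_⟩
    rw [hΘ_def]
    show MvPowerSeries.coeff d (MvPowerSeries.map (σ := ℕ) (Ideal.Quotient.mk 𝔭)
      ((splitRingHom u (Fin.val : Fin n → ℕ) hu hv huv hcover)
        (phiHom τ π hτ hcompat hinj a))) = _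
    rw [MvPowerSeries.coeff_map]
    rfl
  choose gl hgl hglΘ using glex
  -- vanishing of `cf (ι f)` on high monomials
  have cf_iota_high : ∀ (f : MvPowerSeries (Fin n) A) (E : ℕ →₀ ℕ) (i : ℕ),
      n ≤ i → E i ≠ 0 → cf π (ι f) E = 0 := by
    intro f E i hni hEi
    have him : i < bnd E := lt_bnd E i hEi
    have hnm : n ≤ bnd E := le_trans hni (le_of_lt him)
    show MvPowerSeries.coeff (low (Fin.val : Fin (bnd E) → ℕ) Fin.val_injective E)
      (π (bnd E) (ι f)) = 0
    exact hι' f (bnd E) hnm _ ⟨⟨i, him⟩, hEi, hni⟩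
  -- `cf (ι f)` on low monomials
  have cf_iota_low : ∀ (f : MvPowerSeries (Fin n) A) (e : Fin n →₀ ℕ),
      cf π (ι f) (Finsupp.mapDomain Fin.val e) = MvPowerSeries.coeff e f := by
    intro f e
    rw [cf_spec τ π hτ hcompat (ι f) n e,
      show π n (ι f) = f from RingHom.congr_fun hsec f]
  -- the target ring is a domain
  haveI : Nontrivial (MvPowerSeries ℕ (MvPowerSeries (Fin n) A ⧸ 𝔭)) := by
    refine ⟨1, 0, fun h => ?_⟩
    have := congrArg (MvPowerSeries.coeff (0 : ℕ →₀ ℕ)) h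
    rw [MvPowerSeries.coeff_zero_one, map_zero] at this
    exact one_ne_zero this
  haveI : IsDomain (MvPowerSeries ℕ (MvPowerSeries (Fin n) A ⧸ 𝔭)) :=
    NoZeroDivisors.to_isDomain _
  -- the kernel identification
  suffices hker : Ideal.map ι 𝔭 = RingHom.ker Θ by
    rw [hker]
    exact RingHom.ker_isPrime Θ
  apply le_antisymm
  · -- map ι 𝔭 ≤ ker Θ
    rw [Ideal.map_le_iff_le_comap]
    intro f hf
    rw [Ideal.mem_comap, RingHom.mem_ker]
    apply MvPowerSeries.ext
    intro d
    rw [map_zero, hglΘ (ι f) d]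
    by_cases hd : d = 0
    · subst hd
      have : gl (ι f) 0 = f := by
        apply MvPowerSeries.ext
        intro e
        rw [hgl (ι f) 0 e, Finsupp.mapDomain_zero, zero_add, cf_iota_low]
      rw [this, Ideal.Quotient.eq_zero_iff_mem]
      exact hf
    · have : gl (ι f) d = 0 := by
        apply MvPowerSeries.ext
        intro e
        rw [hgl (ι f) d e, map_zero]
        obtain ⟨j, hj⟩ : ∃ j, d j ≠ 0 := by
          by_contra hno
          push_neg at hno
          exact hd (Finsupp.ext fun j => hno j)
        refine cf_iota_high f _ (u j) (by simp only [hu_def]; omega) ?_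
        rw [Finsupp.add_apply, Finsupp.mapDomain_apply hu d j,
          Finsupp.mapDomain_notin_range _ _ (by rintro ⟨b, hb⟩; exact huv j b hb.symm),
          add_zero]
        exact hj
      rw [this, map_zero]
  · -- ker Θ ≤ map ι 𝔭
    intro a ha
    rw [RingHom.mem_ker] at ha
    have hglmem : ∀ d : ℕ →₀ ℕ, gl a d ∈ 𝔭 := by
      intro d
      rw [← Ideal.Quotient.eq_zero_iff_mem, ← hglΘ a d, ha, map_zero]
    obtain ⟨s, hs⟩ := h𝔭fg
    have hcex : ∀ d : ℕ →₀ ℕ, ∃ c : MvPowerSeries (Fin n) A → MvPowerSeries (Fin n) A,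
        ∑ g ∈ s, c g * g = gl a d := by
      intro d
      have : gl a d ∈ Ideal.span (↑s : Set (MvPowerSeries (Fin n) A)) := by
        rw [hs]; exact hglmem d
      obtain ⟨c, -, hc⟩ := Submodule.mem_span_finset.mp this
      exact ⟨c, by simpa [smul_eq_mul] using hc⟩
    choose c hc using hcex
    -- build the coefficients `r g`
    have hrex : ∀ g : MvPowerSeries (Fin n) A, ∃ r : R, ∀ D : ℕ →₀ ℕ, cf π r D =
        MvPowerSeries.coeff (low (Fin.val : Fin n → ℕ) hv D) (c (low u hu D) g) := by
      intro g
      obtain ⟨r, hr⟩ := cf_surjective τ π hτ hsurj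
        (fun D => MvPowerSeries.coeff (low (Fin.val : Fin n → ℕ) hv D) (c (low u hu D) g))
      refine ⟨r, fun D => ?_⟩
      show MvPowerSeries.coeff (low (Fin.val : Fin (bnd D) → ℕ) Fin.val_injective D)
        (π (bnd D) r) = _
      rw [hr (bnd D), mapDomain_val_low (bnd D) D (lt_bnd D)]
    choose r hr using hrex
    have claim : a = ∑ g ∈ s, r g * ι g := by
      refine cf_injective τ π hτ hcompat _ _ (fun D => ?_) hinj
      -- sum the coefficient functions
      have cf_sum : cf π (∑ g ∈ s, r g * ι g) D = ∑ g ∈ s, cf π (r g * ι g) D := by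
        show MvPowerSeries.coeff _ (π (bnd D) _) = _
        rw [map_sum, map_sum]
        rfl
      rw [cf_sum]
      set dt := low u hu D with hdt
      set e0 := low (Fin.val : Fin n → ℕ) hv D with he0
      have hrecomb : Finsupp.mapDomain u dt + Finsupp.mapDomain Fin.val e0 = D :=
        recomb u (Fin.val : Fin n → ℕ) hu hv huv hcover D
      have hterm : ∀ g ∈ s, cf π (r g * ι g) D =
          MvPowerSeries.coeff e0 (c dt g * g) := by
        intro g hg
        rw [cf_mul τ π hτ hcompat]
        conv_lhs => rw [← hrecomb]
        rw [prodsplit u (Fin.val : Fin n → ℕ) hu hv huv hcover dt e0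
          (fun D1 D2 => cf π (r g) D1 * cf π (ι g) D2)]
        rw [Finset.sum_eq_single_of_mem (dt, 0)
          (Finset.HasAntidiagonal.mem_antidiagonal.mpr (add_zero dt)) ?vanish]
        case vanish =>
          intro q hq hne
          have hq2 : q.2 ≠ 0 := by
            intro h0
            apply hne
            have := Finset.HasAntidiagonal.mem_antidiagonal.mp hq
            rw [h0, add_zero] at this
            rw [Prod.ext_iff]
            exact ⟨this, h0⟩
          obtain ⟨j, hj⟩ : ∃ j, q.2 j ≠ 0 := by
            by_contra hno
            push_neg at hno
            exact hq2 (Finsupp.ext fun j => hno j)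
          refine Finset.sum_eq_zero fun rr hrr => ?_
          have : cf π (ι g) (Finsupp.mapDomain u q.2 + Finsupp.mapDomain Fin.val rr.2) = 0 := by
            refine cf_iota_high g _ (u j) (by simp only [hu_def]; omega) ?_
            rw [Finsupp.add_apply, Finsupp.mapDomain_apply hu q.2 j,
              Finsupp.mapDomain_notin_range _ _
                (by rintro ⟨b, hb⟩; exact huv j b hb.symm), add_zero]
            exact hj
          rw [this, mul_zero]
        · rw [MvPowerSeries.coeff_mul]
          refine Finset.sum_congr rfl fun rr hrr => ?_
          rw [Finsupp.mapDomain_zero, zero_add, cf_iota_low g rr.2]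
          congr 1
          rw [hr g (Finsupp.mapDomain u dt + Finsupp.mapDomain Fin.val rr.1),
            low_add, low_add, low_mapDomain, low_mapDomain' u (Fin.val : Fin n → ℕ) hu huv,
            low_mapDomain,
            low_mapDomain' (Fin.val : Fin n → ℕ) u hv (fun b a => (huv a b).symm),
            add_zero, zero_add]
      rw [Finset.sum_congr rfl hterm, ← map_sum, hc dt, hgl a dt, hrecomb]
    rw [claim]
    exact Ideal.sum_mem _ fun g hg => Ideal.mul_mem_left _ _
      (Ideal.mem_map_of_mem ι (by rw [← hs]; exact Ideal.subset_span hg))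

end Main

end Stmt15Aux



open MvPowerSeries

/-- Let `R = lim_n ℤ_p[[X₁, …, Xₙ]]` (transition maps kill the last variable;
characterized on coefficients; `R` is characterized by the limit axioms below), and
let `ιₙ : Rₙ → R` be the natural inclusion (a ring-hom section of the projection `πₙ`
which, after any projection `π_m` with `m ≥ n`, is the canonical inclusion of power
series in the first `n` variables: characterized on coefficients by `hι` and `hι'`).
If `𝔭` is a prime ideal of `Rₙ`, then the ideal of `R` generated by `ιₙ(𝔭)` is prime. -/
theorem stmt15 (p : ℕ) [Fact p.Prime]
    (τ : ∀ n, MvPowerSeries (Fin (n + 1)) ℤ_[p] →+* MvPowerSeries (Fin n) ℤ_[p])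
    (hτ : ∀ n (f : MvPowerSeries (Fin (n + 1)) ℤ_[p]) (d : Fin n →₀ ℕ),
      MvPowerSeries.coeff d (τ n f) =
        MvPowerSeries.coeff (Finsupp.mapDomain Fin.castSucc d) f)
    (R : Type) [CommRing R]
    (π : ∀ n, R →+* MvPowerSeries (Fin n) ℤ_[p])
    (hcompat : ∀ n, (τ n).comp (π (n + 1)) = π n)
    (hinj : ∀ a : R, (∀ n, π n a = 0) → a = 0)
    (hsurj : ∀ x : ∀ n, MvPowerSeries (Fin n) ℤ_[p],
      (∀ n, τ n (x (n + 1)) = x n) → ∃ a : R, ∀ n, π n a = x n)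
    (n : ℕ) (ι : MvPowerSeries (Fin n) ℤ_[p] →+* R)
    (hsec : (π n).comp ι = RingHom.id _)
    (hι : ∀ (f : MvPowerSeries (Fin n) ℤ_[p]) (m : ℕ) (h : n ≤ m) (d : Fin n →₀ ℕ),
      MvPowerSeries.coeff (Finsupp.mapDomain (Fin.castLE h) d) (π m (ι f)) =
        MvPowerSeries.coeff d f)
    (hι' : ∀ (f : MvPowerSeries (Fin n) ℤ_[p]) (m : ℕ) (_ : n ≤ m) (d : Fin m →₀ ℕ),
      (∃ i : Fin m, d i ≠ 0 ∧ n ≤ (i : ℕ)) →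
        MvPowerSeries.coeff d (π m (ι f)) = 0)
    (𝔭 : Ideal (MvPowerSeries (Fin n) ℤ_[p])) (h𝔭 : 𝔭.IsPrime) :
    (Ideal.map ι 𝔭).IsPrime := by
  haveI : IsNoetherianRing ℤ_[p] := PrincipalIdealRing.isNoetherianRing
  haveI : IsNoetherianRing (MvPowerSeries (Fin n) ℤ_[p]) :=
    Stmt15Aux.mvPowerSeries_fin_isNoetherianRing ℤ_[p] n
  exact Stmt15Aux.map_iota_isPrime τ hτ π hcompat hinj hsurj n ι hsec hι' 𝔭 h𝔭
    (IsNoetherian.noetherian 𝔭)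
end
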